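/- arXiv:1811.01224 — 9 statements merged into one kernel-verified Lean document; each statement's English description precedes it below -/
import Mathlib

section
/- Let σ be a nontrivial automorphism of an atomless Boolean algebra B. Then there exists a nonzero element a ∈ B with σ(a) ≠ a and σ(a) ⊓ a = 0. -/
/-- In an atomless Boolean algebra, every nontrivial automorphism moves some nonzero
element to a disjoint element. -/
theorem exists_disjoint_moved {B : Type*} [BooleanAlgebra B]
    (hatomless : ∀ a : B, ¬IsAtom a)
    (σ : B ≃o B) (hσ : ∃ x : B, σ x ≠ x) :
    ∃ a : B, a ≠ ⊥ ∧ σ a ≠ a ∧ σ a ⊓ a = ⊥ := by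
  obtain ⟨x, hx⟩ := hσ
  by_cases h1 : x \ σ x = ⊥
  · -- then σ x \ x ≠ ⊥; take a = σ⁻¹ (σ x \ x)
    have h2 : σ x \ x ≠ ⊥ := by
      intro h2
      exact hx (le_antisymm (sdiff_eq_bot_iff.mp h2) (sdiff_eq_bot_iff.mp h1))
    set c : B := σ x \ x with hc
    have hcx : c ≤ σ x := sdiff_le
    have hdisj : c ⊓ x = ⊥ := disjoint_sdiff_self_left.eq_bot
    have ha_le : σ.symm c ≤ x := by
      have := σ.symm.monotone hcx
      simpa using this
    have habot : σ.symm c ≠ ⊥ := by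
      intro h
      apply h2
      have : σ (σ.symm c) = σ ⊥ := congrArg σ h
      simpa using this
    have hmeet : σ (σ.symm c) ⊓ σ.symm c = ⊥ := by
      rw [σ.apply_symm_apply]
      exact le_bot_iff.mp (le_trans (inf_le_inf_left c ha_le) hdisj.le)
    refine ⟨σ.symm c, habot, ?_, hmeet⟩
    intro heq
    apply habot
    rw [heq] at hmeet
    simpa using hmeet
  · -- take a = x \ σ x
    set a : B := x \ σ x with ha
    have hax : a ≤ x := sdiff_le
    have hdisj : a ⊓ σ x = ⊥ := disjoint_sdiff_self_left.eq_bot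
    have hmeet : σ a ⊓ a = ⊥ := by
      have : σ a ≤ σ x := σ.monotone hax
      have h3 : σ a ⊓ a ≤ σ x ⊓ a := inf_le_inf_right a this
      rw [inf_comm] at hdisj
      exact le_bot_iff.mp (h3.trans hdisj.le)
    refine ⟨a, h1, ?_, hmeet⟩
    intro heq
    apply h1
    rw [heq] at hmeet
    simpa using hmeet
end

section
/- The homomorphism φ from the group of automorphisms of an atomless Boolean algebra B to the automorphism group of the lattice of subalgebras of B, sending σ to the induced map on subalgebras, is injective. -/
/-- `S` is (the carrier of) a Boolean subalgebra of `B`. -/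
structure IsBooleanSubalgebra {B : Type*} [BooleanAlgebra B] (S : Set B) : Prop where
  bot_mem : (⊥ : B) ∈ S
  top_mem : (⊤ : B) ∈ S
  inf_mem : ∀ x ∈ S, ∀ y ∈ S, x ⊓ y ∈ S
  sup_mem : ∀ x ∈ S, ∀ y ∈ S, x ⊔ y ∈ S
  compl_mem : ∀ x ∈ S, xᶜ ∈ S

private lemma orderIso_map_compl {B : Type*} [BooleanAlgebra B] (σ : B ≃o B) (a : B) :
    σ aᶜ = (σ a)ᶜ := by
  refine (IsCompl.compl_eq ?_).symm
  exact IsCompl.of_eq (by rw [← σ.map_inf, inf_compl_eq_bot, σ.map_bot])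
    (by rw [← σ.map_sup, sup_compl_eq_top, σ.map_top])

private lemma gen_subalgebra {B : Type*} [BooleanAlgebra B] (a : B) :
    IsBooleanSubalgebra ({⊥, a, aᶜ, ⊤} : Set B) := by
  constructor
  · simp
  · simp
  · simp only [Set.mem_insert_iff, Set.mem_singleton_iff]
    rintro x (rfl|rfl|rfl|rfl) y (rfl|rfl|rfl|rfl) <;> simp
  · simp only [Set.mem_insert_iff, Set.mem_singleton_iff]
    rintro x (rfl|rfl|rfl|rfl) y (rfl|rfl|rfl|rfl) <;> simp
  · simp only [Set.mem_insert_iff, Set.mem_singleton_iff]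
    rintro x (rfl|rfl|rfl|rfl) <;> simp

private lemma key {B : Type*} [BooleanAlgebra B] (σ τ : B ≃o B)
    (h : ∀ S : Set B, IsBooleanSubalgebra S → σ '' S = τ '' S)
    (a : B) (ha0 : a ≠ ⊥) (ha1 : a ≠ ⊤) : σ a = τ a ∨ σ a = (τ a)ᶜ := by
  have hmem : σ a ∈ σ '' ({⊥, a, aᶜ, ⊤} : Set B) := ⟨a, by simp, rfl⟩
  rw [h _ (gen_subalgebra a)] at hmem
  obtain ⟨x, hx, hxa⟩ := hmem
  simp only [Set.mem_insert_iff, Set.mem_singleton_iff] at hx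
  rcases hx with rfl | rfl | rfl | rfl
  · rw [τ.map_bot] at hxa
    exact absurd (σ.injective (show σ a = σ ⊥ by rw [σ.map_bot, ← hxa])) ha0
  · exact Or.inl hxa.symm
  · rw [orderIso_map_compl] at hxa
    exact Or.inr hxa.symm
  · rw [τ.map_top] at hxa
    exact absurd (σ.injective (show σ a = σ ⊤ by rw [σ.map_top, ← hxa])) ha1

/-- For an atomless Boolean algebra `B`, the homomorphism sending an automorphism `σ`
of `B` to the induced map `S ↦ σ '' S` on the lattice of subalgebras is injective:
if two automorphisms induce the same map on subalgebras, they are equal. -/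
theorem subalgebra_action_injective {B : Type*} [BooleanAlgebra B]
    (hatomless : ∀ a : B, ¬IsAtom a) (σ τ : B ≃o B)
    (h : ∀ S : Set B, IsBooleanSubalgebra S → σ '' S = τ '' S) :
    σ = τ := by
  ext a
  rcases eq_or_ne a ⊥ with rfl | ha0
  · rw [σ.map_bot, τ.map_bot]
  rcases eq_or_ne a ⊤ with rfl | ha1
  · rw [σ.map_top, τ.map_top]
  rcases key σ τ h a ha0 ha1 with hk | hk
  · exact hk
  -- bad case : σ a = (τ a)ᶜ
  exfalso
  -- a is not an atom and a ≠ ⊥, so find ⊥ < b < a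
  have := hatomless a
  rw [IsAtom] at this
  push_neg at this
  obtain ⟨b, hba, hb0⟩ := this ha0
  have hb1' : b ≠ ⊤ := ne_top_of_lt hba
  have hlt : σ b < (τ a)ᶜ := hk ▸ σ.strictMono hba
  rcases key σ τ h b hb0 hb1' with hk2 | hk2
  · -- σ b = τ b, so τ b < (τ a)ᶜ = τ aᶜ, hence b < aᶜ; but b ≤ a, b ≠ ⊥
    rw [hk2, ← orderIso_map_compl] at hlt
    have hba' : b < aᶜ := τ.lt_iff_lt.mp hlt
    have : b ≤ a ⊓ aᶜ := le_inf hba.le hba'.le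
    rw [inf_compl_eq_bot, le_bot_iff] at this
    exact hb0 this
  · -- σ b = (τ b)ᶜ, so τ bᶜ < τ aᶜ, hence bᶜ < aᶜ, hence a < b, contradiction
    rw [hk2, ← orderIso_map_compl, ← orderIso_map_compl] at hlt
    have : bᶜ < aᶜ := τ.lt_iff_lt.mp hlt
    exact absurd (compl_lt_compl_iff_lt.mp this) hba.asymm
end

section
/- Let (Rᵢ)_{i∈ℤ} be a partition of ℕ into infinite sets with increasing enumerations Rᵢ = {cᵢ⁰ < cᵢ¹ < ⋯}, let h : ℕ → ℕ have range A, let w be the permutation with w(cᵢʲ) = c_{i+1}ʲ, let g₀ = ∏_j (c₀^{2j}, c₀^{2j+1}), g₁ = ∏_j (c₀^{2j+1}, c₀^{2j+2}), and b = ∏_{h(t)=n} (cₙᵗ, cₙ^{t+1}). Then for every n: n ∉ A if and only if [g₀, b^{wⁿ}] = 1 and [g₁, b^{wⁿ}] = 1, where [x,y] = x⁻¹y⁻¹xy and xʸ = y⁻¹xy. -/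
/-- The commutator `[x, y] = x⁻¹y⁻¹xy`. -/
def gComm {G : Type*} [Group G] (x y : G) : G := x⁻¹ * y⁻¹ * x * y

/-- The conjugate `xʸ = y⁻¹xy`. -/
def gConj {G : Type*} [Group G] (x y : G) : G := y⁻¹ * x * y

open scoped commutatorElement in
/-- A commutator is trivial iff the elements commute. -/
theorem gComm_eq_one_iff {G : Type*} [Group G] (x y : G) :
    gComm x y = 1 ↔ x * y = y * x := by
  have h1 : gComm x y = ⁅x⁻¹, y⁻¹⁆ := by
    simp [gComm, commutatorElement_def, mul_assoc]
  rw [h1, commutatorElement_eq_one_iff_mul_comm, ← mul_inv_rev, ← mul_inv_rev,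
    inv_inj]
  exact eq_comm

/-- Morozov's commutator coding: with columns `(Rᵢ)_{i ∈ ℤ}` partitioning `ℕ` with
increasing enumerations `c i 0 < c i 1 < ⋯`, an enumeration `h` of `A`, the shift `w`,
the products of transpositions `g₀ = ∏ⱼ (c₀²ʲ, c₀²ʲ⁺¹)`, `g₁ = ∏ⱼ (c₀²ʲ⁺¹, c₀²ʲ⁺²)`,
and `b = ∏_{h(t) = n} (cₙᵗ, cₙᵗ⁺¹)` (all supports pairwise disjoint), we have
`n ∉ A ↔ [g₀, b^{wⁿ}] = 1 ∧ [g₁, b^{wⁿ}] = 1`. -/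
theorem commutator_coding
    (c : ℤ → ℕ → ℕ)
    (hc_inj : Function.Injective fun p : ℤ × ℕ => c p.1 p.2)
    (hc_surj : ∀ x : ℕ, ∃ i j, c i j = x)
    (hc_mono : ∀ i : ℤ, StrictMono (c i))
    (h : ℕ → ℕ) (A : Set ℕ) (hA : A = Set.range h)
    (hsep : ∀ t₁ t₂ : ℕ, h t₁ = h t₂ → t₁ < t₂ → t₁ + 1 < t₂)
    (w : Equiv.Perm ℕ) (hw : ∀ (i : ℤ) (j : ℕ), w (c i j) = c (i + 1) j)
    (g₀ : Equiv.Perm ℕ)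
    (hg₀ : ∀ j : ℕ, g₀ (c 0 (2 * j)) = c 0 (2 * j + 1) ∧ g₀ (c 0 (2 * j + 1)) = c 0 (2 * j))
    (hg₀' : ∀ x : ℕ, (∀ j : ℕ, x ≠ c 0 j) → g₀ x = x)
    (g₁ : Equiv.Perm ℕ)
    (hg₁ : ∀ j : ℕ, g₁ (c 0 (2 * j + 1)) = c 0 (2 * j + 2) ∧ g₁ (c 0 (2 * j + 2)) = c 0 (2 * j + 1))
    (hg₁' : ∀ x : ℕ, (∀ j : ℕ, x ≠ c 0 j) → g₁ x = x)
    (hg₁0 : g₁ (c 0 0) = c 0 0)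
    (b : Equiv.Perm ℕ)
    (hb : ∀ t : ℕ, b (c (h t) t) = c (h t) (t + 1) ∧ b (c (h t) (t + 1)) = c (h t) t)
    (hb' : ∀ x : ℕ, (∀ t : ℕ, x ≠ c (h t) t ∧ x ≠ c (h t) (t + 1)) → b x = x) :
    ∀ n : ℕ, n ∉ A ↔
      (gComm g₀ (gConj b (w ^ n)) = 1 ∧ gComm g₁ (gConj b (w ^ n)) = 1) := by
  intro n
  -- injectivity of c as a two-argument function
  have hcinj : ∀ (i₁ : ℤ) (j₁ : ℕ) (i₂ : ℤ) (j₂ : ℕ),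
      c i₁ j₁ = c i₂ j₂ → i₁ = i₂ ∧ j₁ = j₂ := by
    intro i₁ j₁ i₂ j₂ hEq
    have := hc_inj (a₁ := (i₁, j₁)) (a₂ := (i₂, j₂)) hEq
    exact Prod.mk.injEq _ _ _ _ ▸ this
  have c0inj : ∀ a b : ℕ, c 0 a = c 0 b → a = b := fun a b hEq => (hcinj 0 a 0 b hEq).2
  -- powers of w
  have hwn : ∀ (m : ℕ) (i : ℤ) (j : ℕ), (w ^ m) (c i j) = c (i + m) j := by
    intro m
    induction m with
    | zero => intro i j; simp
    | succ m ih =>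
      intro i j
      have hstep : (w ^ (m + 1)) (c i j) = (w ^ m) (w (c i j)) := by
        rw [pow_succ]; rfl
      rw [hstep, hw, ih]
      congr 1
      push_cast
      ring
  have hwninv : ∀ (i : ℤ) (j : ℕ), (w ^ n)⁻¹ (c i j) = c (i - n) j := by
    intro i j
    apply (w ^ n).injective
    rw [show (w ^ n) ((w ^ n)⁻¹ (c i j)) = c i j from Equiv.apply_symm_apply _ _, hwn]
    congr 1
    ring
  set s : Equiv.Perm ℕ := gConj b (w ^ n) with hs_def
  have hs : ∀ x : ℕ, s x = (w ^ n)⁻¹ (b ((w ^ n) x)) := fun x => rfl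
  -- b stays within each column
  have hbcol : ∀ (i : ℤ) (j : ℕ), ∃ j', b (c i j) = c i j' := by
    intro i j
    by_cases e1 : (h j : ℤ) = i
    · exact ⟨j + 1, by rw [← e1]; exact (hb j).1⟩
    · cases j with
      | zero =>
        refine ⟨0, hb' _ fun t => ⟨fun hEq => ?_, fun hEq => ?_⟩⟩
        · obtain ⟨hi, hj⟩ := hcinj _ _ _ _ hEq
          exact e1 (hj ▸ hi.symm)
        · exact absurd (hcinj _ _ _ _ hEq).2 (by omega)
      | succ m =>
        by_cases e2 : (h m : ℤ) = i
        · exact ⟨m, by rw [← e2]; exact (hb m).2⟩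
        · refine ⟨m + 1, hb' _ fun t => ⟨fun hEq => ?_, fun hEq => ?_⟩⟩
          · obtain ⟨hi, hj⟩ := hcinj _ _ _ _ hEq
            exact e1 (hj ▸ hi.symm)
          · obtain ⟨hi, hj⟩ := hcinj _ _ _ _ hEq
            have : t = m := by omega
            exact e2 (this ▸ hi.symm)
  -- s stays within each column
  have hscol : ∀ (i : ℤ) (j : ℕ), ∃ j', s (c i j) = c i j' := by
    intro i j
    obtain ⟨j', hj'⟩ := hbcol (i + n) j
    refine ⟨j', ?_⟩
    rw [hs, hwn, hj', hwninv]
    congr 1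
    ring
  -- g₀ and g₁ stay within column 0
  have hg0col : ∀ j : ℕ, ∃ j', g₀ (c 0 j) = c 0 j' := by
    intro j
    rcases Nat.even_or_odd j with ⟨k, hk⟩ | ⟨k, hk⟩
    · exact ⟨2 * k + 1, by rw [show j = 2 * k by omega]; exact (hg₀ k).1⟩
    · exact ⟨2 * k, by rw [show j = 2 * k + 1 by omega]; exact (hg₀ k).2⟩
  have hg1col : ∀ j : ℕ, ∃ j', g₁ (c 0 j) = c 0 j' := by
    intro j
    rcases Nat.even_or_odd j with ⟨k, hk⟩ | ⟨k, hk⟩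
    · cases k with
      | zero => exact ⟨0, by rw [show j = 0 by omega]; exact hg₁0⟩
      | succ m =>
        exact ⟨2 * m + 1, by rw [show j = 2 * m + 2 by omega]; exact (hg₁ m).2⟩
    · exact ⟨2 * k + 2, by rw [show j = 2 * k + 1 by omega]; exact (hg₁ k).1⟩
  constructor
  · -- n ∉ A : both commutators vanish
    intro hn
    have hn' : ∀ t : ℕ, h t ≠ n := by
      intro t hEq
      exact hn (hA ▸ ⟨t, hEq⟩)
    have hsfix0 : ∀ j : ℕ, s (c 0 j) = c 0 j := by
      intro j
      rw [hs, hwn, zero_add]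
      have hbfix : b (c (n : ℤ) j) = c (n : ℤ) j := by
        refine hb' _ fun t => ⟨fun hEq => ?_, fun hEq => ?_⟩
        · exact hn' t (by exact_mod_cast (hcinj _ _ _ _ hEq).1.symm)
        · exact hn' t (by exact_mod_cast (hcinj _ _ _ _ hEq).1.symm)
      rw [hbfix, hwninv, sub_self]
    have key : ∀ g : Equiv.Perm ℕ, (∀ j : ℕ, ∃ j', g (c 0 j) = c 0 j') →
        (∀ x : ℕ, (∀ j : ℕ, x ≠ c 0 j) → g x = x) → gComm g s = 1 := by
      intro g hgcol hgfix'
      rw [gComm_eq_one_iff]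
      apply Equiv.ext
      intro x
      obtain ⟨i, j, rfl⟩ := hc_surj x
      simp only [Equiv.Perm.mul_apply]
      by_cases hi : i = 0
      · subst hi
        rw [hsfix0 j]
        obtain ⟨j', hj'⟩ := hgcol j
        rw [hj', hsfix0]
      · have hgfix : ∀ j'' : ℕ, g (c i j'') = c i j'' := by
          intro j''
          exact hgfix' _ fun j0 hEq => hi (hcinj _ _ _ _ hEq).1
        obtain ⟨j', hj'⟩ := hscol i j
        rw [hj', hgfix, hgfix, hj']
    exact ⟨key g₀ hg0col hg₀', key g₁ hg1col hg₁'⟩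
  · -- n ∈ A : at least one commutator is nontrivial
    rintro ⟨h0C, h1C⟩ hnA
    obtain ⟨t, ht⟩ : ∃ t, h t = n := by rwa [hA] at hnA
    have hst1 : s (c 0 (t + 1)) = c 0 t := by
      rw [hs, hwn, zero_add]
      have : ((n : ℤ)) = ((h t : ℕ) : ℤ) := by exact_mod_cast ht.symm
      rw [this, (hb t).2]
      rw [show ((h t : ℕ) : ℤ) = (n : ℤ) from by exact_mod_cast ht, hwninv, sub_self]
    have hst2 : s (c 0 (t + 2)) = c 0 (t + 2) ∨ s (c 0 (t + 2)) = c 0 (t + 3) := by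
      by_cases hx : h (t + 2) = n
      · right
        rw [hs, hwn, zero_add]
        rw [show ((n : ℤ)) = ((h (t + 2) : ℕ) : ℤ) from by exact_mod_cast hx.symm]
        rw [(hb (t + 2)).1]
        rw [show ((h (t + 2) : ℕ) : ℤ) = (n : ℤ) from by exact_mod_cast hx, hwninv,
          sub_self]
      · left
        rw [hs, hwn, zero_add]
        have hbfix : b (c (n : ℤ) (t + 2)) = c (n : ℤ) (t + 2) := by
          refine hb' _ fun t'' => ⟨fun hEq => ?_, fun hEq => ?_⟩
          · obtain ⟨hi, hj⟩ := hcinj _ _ _ _ hEq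
            exact hx (by rw [hj]; exact_mod_cast hi.symm)
          · obtain ⟨hi, hj⟩ := hcinj _ _ _ _ hEq
            have ht'' : t'' = t + 1 := by omega
            have hht : h (t + 1) = h t := by
              rw [← ht''];
              have : h t'' = n := by exact_mod_cast hi.symm
              rw [this, ht''] at *
              omega
            exact absurd (hsep t (t + 1) hht.symm (by omega)) (by omega)
        rw [hbfix, hwninv, sub_self]
    rcases Nat.even_or_odd t with ⟨k, hk⟩ | ⟨k, hk⟩
    · -- t even : g₁ fails to commute
      have hco : g₁ * s = s * g₁ := (gComm_eq_one_iff _ _).1 h1C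
      have hco2 : g₁ (s (c 0 (t + 1))) = s (g₁ (c 0 (t + 1))) := by
        have := Equiv.ext_iff.1 hco (c 0 (t + 1))
        simpa [Equiv.Perm.mul_apply] using this
      rw [hst1] at hco2
      have hgx : g₁ (c 0 (t + 1)) = c 0 (t + 2) := by
        rw [show t + 1 = 2 * k + 1 by omega]
        rw [show t + 2 = 2 * k + 2 by omega]
        exact (hg₁ k).1
      rw [hgx] at hco2
      -- left side is c 0 0 or c 0 (t - 1); right side is c 0 (t+2) or c 0 (t+3)
      have hleft : g₁ (c 0 t) = c 0 0 ∨ g₁ (c 0 t) = c 0 (t - 1) := by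
        cases k with
        | zero => left; rw [show t = 0 by omega]; exact hg₁0
        | succ m =>
          right
          rw [show t - 1 = 2 * m + 1 by omega, show t = 2 * m + 2 by omega]
          exact (hg₁ m).2
      rcases hleft with hl | hl <;> rw [hl] at hco2 <;>
        rcases hst2 with h2 | h2 <;> rw [h2] at hco2 <;>
        exact absurd (c0inj _ _ hco2) (by omega)
    · -- t odd : g₀ fails to commute
      have hco : g₀ * s = s * g₀ := (gComm_eq_one_iff _ _).1 h0C
      have hco2 : g₀ (s (c 0 (t + 1))) = s (g₀ (c 0 (t + 1))) := by
        have := Equiv.ext_iff.1 hco (c 0 (t + 1))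
        simpa [Equiv.Perm.mul_apply] using this
      rw [hst1] at hco2
      have hgx : g₀ (c 0 (t + 1)) = c 0 (t + 2) := by
        rw [show t + 1 = 2 * (k + 1) by omega, show t + 2 = 2 * (k + 1) + 1 by omega]
        exact (hg₀ (k + 1)).1
      rw [hgx] at hco2
      have hl : g₀ (c 0 t) = c 0 (2 * k) := by
        rw [show t = 2 * k + 1 by omega]
        exact (hg₀ k).2
      rw [hl] at hco2
      rcases hst2 with h2 | h2 <;> rw [h2] at hco2 <;>
        exact absurd (c0inj _ _ hco2) (by omega)
end

section
/- Let z be the permutation of ℕ defined by z(0)=0, z(2)=1, z(k)=k−2 for even k ≥ 4, and z(k)=k+2 for odd k, and let τ = (0,1). Then for all n, m ∈ ℕ with n ≠ m there exist integers n₁, m₁ ∈ ℤ such that (τ^{z^{n₁}})^{τ^{z^{m₁}}} = (n, m), where xʸ = y⁻¹xy and z^{k} for negative k denotes powers of z⁻¹. -/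
section aux

variable (z : Equiv.Perm ℕ)

lemma zpow_fix0 (hz0 : z 0 = 0) (k : ℤ) : (z ^ k) 0 = 0 :=
  Function.IsFixedPt.perm_zpow hz0 k

lemma zpow_pos_one (hzodd : ∀ k : ℕ, k % 2 = 1 → z k = k + 2) (j : ℕ) :
    (z ^ (j : ℤ)) 1 = 2 * j + 1 := by
  induction j with
  | zero => simp
  | succ n ih =>
    have h1 : (z ^ ((n : ℤ) + 1)) 1 = z ((z ^ (n : ℤ)) 1) := by
      rw [add_comm, zpow_add, zpow_one, Equiv.Perm.mul_apply]
    have h2 : z (2 * n + 1) = 2 * n + 3 := by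
      have := hzodd (2 * n + 1) (by omega)
      omega
    push_cast
    rw [h1, ih, h2]
    ring

lemma zpow_neg_one' (hz2 : z 2 = 1)
    (hzeven : ∀ k : ℕ, k % 2 = 0 → 4 ≤ k → z k = k - 2) (j : ℕ) (hj : 1 ≤ j) :
    (z ^ (-(j : ℤ))) 1 = 2 * j := by
  induction j with
  | zero => omega
  | succ n ih =>
    have hinv : z⁻¹ 1 = 2 := by
      rw [← hz2]; simp
    rcases Nat.eq_or_lt_of_le hj with h | h
    · have : (n : ℤ) = 0 := by omega
      have hn : n = 0 := by omega
      subst hn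
      simpa using hinv
    · have hn1 : 1 ≤ n := by omega
      have h1 : (z ^ (-((n : ℤ) + 1))) 1 = z⁻¹ ((z ^ (-(n : ℤ))) 1) := by
        have : (-((n : ℤ) + 1)) = (-1) + (-(n : ℤ)) := by ring
        rw [this, zpow_add, zpow_neg_one]
        rfl
      have h2 : z⁻¹ (2 * n) = 2 * n + 2 := by
        have hz : z (2 * n + 2) = 2 * n := by
          have := hzeven (2 * n + 2) (by omega) (by omega)
          omega
        apply z.injective
        rw [show z (z⁻¹ (2 * n)) = 2 * n from Equiv.apply_symm_apply z _, hz]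
      push_cast
      rw [h1, ih hn1, h2]
      ring

/-- For every `t ≥ 1` there is `k : ℤ` with `gConj (swap 0 1) (z ^ k) = swap 0 t`. -/
lemma key_s7 (hz0 : z 0 = 0) (hz2 : z 2 = 1)
    (hzeven : ∀ k : ℕ, k % 2 = 0 → 4 ≤ k → z k = k - 2)
    (hzodd : ∀ k : ℕ, k % 2 = 1 → z k = k + 2) (t : ℕ) (ht : 1 ≤ t) :
    ∃ k : ℤ, gConj (Equiv.swap 0 1) (z ^ k) = Equiv.swap 0 t := by
  have main : ∀ k : ℤ, gConj (Equiv.swap 0 1) (z ^ k)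
      = Equiv.swap ((z ^ (-k)) 0) ((z ^ (-k)) 1) := by
    intro k
    unfold gConj
    rw [← zpow_neg, show (z : Equiv.Perm ℕ) ^ k = (z ^ (-k))⁻¹ from by rw [zpow_neg, inv_inv]]
    exact (Equiv.swap_apply_apply _ _ _).symm
  rcases Nat.even_or_odd t with ⟨j, hjt⟩ | ⟨j, hjt⟩
  · -- t = 2j, j ≥ 1 : take k = j, so -k = -j
    refine ⟨(j : ℤ), ?_⟩
    rw [main, zpow_fix0 z hz0, zpow_neg_one' z hz2 hzeven j (by omega)]
    congr 1
    omega
  · -- t = 2j+1 : take k = -j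
    refine ⟨-(j : ℤ), ?_⟩
    rw [main, neg_neg, zpow_fix0 z hz0, zpow_pos_one z hzodd j]
    congr 1
    omega

end aux

lemma gConj_swap_swap (a b : ℕ) (ha : a ≠ 0) (hb : b ≠ 0) (hab : a ≠ b) :
    gConj (Equiv.swap 0 a) (Equiv.swap 0 b) = Equiv.swap b a := by
  unfold gConj
  rw [Equiv.swap_inv]
  have : Equiv.swap 0 b * Equiv.swap 0 a * (Equiv.swap 0 b)⁻¹
      = Equiv.swap (Equiv.swap 0 b 0) (Equiv.swap 0 b a) := (Equiv.swap_apply_apply _ _ _).symm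
  rw [Equiv.swap_inv] at this
  rw [this, Equiv.swap_apply_left, Equiv.swap_apply_of_ne_of_ne ha hab]

lemma gConj_swap_self (a : ℕ) :
    gConj (Equiv.swap 0 a) (Equiv.swap 0 a) = Equiv.swap 0 a := by
  unfold gConj
  rw [Equiv.swap_inv]
  rw [Equiv.swap_mul_self, one_mul]

/-- With `z` the permutation of `ℕ` given by `z(0)=0`, `z(2)=1`, `z(k)=k−2` for even `k ≥ 4`
and `z(k)=k+2` for odd `k`, and `τ = (0,1)`: every transposition `(n,m)` can be written as
`(τ^{z^{n₁}})^{τ^{z^{m₁}}}` for some integers `n₁, m₁`. -/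
theorem transposition_generation
    (z : Equiv.Perm ℕ)
    (hz0 : z 0 = 0) (hz2 : z 2 = 1)
    (hzeven : ∀ k : ℕ, k % 2 = 0 → 4 ≤ k → z k = k - 2)
    (hzodd : ∀ k : ℕ, k % 2 = 1 → z k = k + 2) :
    ∀ n m : ℕ, n ≠ m →
      ∃ n₁ m₁ : ℤ,
        gConj (gConj (Equiv.swap 0 1) (z ^ n₁)) (gConj (Equiv.swap 0 1) (z ^ m₁)) =
          Equiv.swap n m := by
  intro n m hnm
  rcases Nat.eq_zero_or_pos n with hn | hn
  · -- n = 0, m ≥ 1 : take both exponents mapping to swap 0 m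
    subst hn
    obtain ⟨k, hk⟩ := key_s7 z hz0 hz2 hzeven hzodd m (by omega)
    exact ⟨k, k, by rw [hk, gConj_swap_self]⟩
  rcases Nat.eq_zero_or_pos m with hm | hm
  · subst hm
    obtain ⟨k, hk⟩ := key_s7 z hz0 hz2 hzeven hzodd n (by omega)
    refine ⟨k, k, ?_⟩
    rw [hk, gConj_swap_self, Equiv.swap_comm]
  · obtain ⟨k₁, hk₁⟩ := key_s7 z hz0 hz2 hzeven hzodd m (by omega)
    obtain ⟨k₂, hk₂⟩ := key_s7 z hz0 hz2 hzeven hzodd n (by omega)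
    refine ⟨k₁, k₂, ?_⟩
    rw [hk₁, hk₂, gConj_swap_swap m n (by omega) (by omega) (fun h => hnm h.symm), Equiv.swap_comm]
end

section
/- With z and τ as above, every permutation of ℕ that is a product of finitely many disjoint transpositions (and fixes all other points) can be written as a finite product of conjugates of τ by powers of z and their conjugates, i.e., as ∏_{(i,j)∈F} (τ^{z^i})^{τ^{z^j}} for some finite set F of integer pairs. -/
section aux

variable (z : Equiv.Perm ℕ)

lemma zpow_zero_fix (hz0 : z 0 = 0) (i : ℤ) : (z ^ i) 0 = 0 :=
  Equiv.Perm.zpow_apply_eq_self_of_apply_eq_self hz0 i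

lemma z_odd (hzodd : ∀ k : ℕ, k % 2 = 1 → z k = k + 2) (m : ℕ) :
    (z ^ m) 1 = 2 * m + 1 := by
  induction m with
  | zero => simp
  | succ n ih =>
      rw [pow_succ', Equiv.Perm.mul_apply, ih, hzodd (2 * n + 1) (by omega)]
      omega

lemma z_even (hz2 : z 2 = 1)
    (hzeven : ∀ k : ℕ, k % 2 = 0 → 4 ≤ k → z k = k - 2) (m : ℕ) :
    (z ^ (m + 1)) (2 * (m + 1)) = 1 := by
  induction m with
  | zero => simpa using hz2
  | succ n ih =>
      have h4 : z (2 * (n + 2)) = 2 * (n + 1) := by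
        rw [hzeven (2 * (n + 2)) (by omega) (by omega)]; omega
      calc (z ^ (n + 2)) (2 * (n + 2)) = (z ^ (n + 1)) (z (2 * (n + 2))) := by
            rw [pow_succ, Equiv.Perm.mul_apply]
        _ = 1 := by rw [h4]; exact ih

lemma surj_one (hz2 : z 2 = 1)
    (hzeven : ∀ k : ℕ, k % 2 = 0 → 4 ≤ k → z k = k - 2)
    (hzodd : ∀ k : ℕ, k % 2 = 1 → z k = k + 2)
    (n : ℕ) (hn : n ≠ 0) : ∃ i : ℤ, (z ^ i) 1 = n := by
  rcases Nat.even_or_odd n with ⟨m, hm⟩ | ⟨m, hm⟩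
  · -- n = 2m, m ≥ 1
    have hm1 : 1 ≤ m := by omega
    refine ⟨-(m : ℤ), ?_⟩
    have key : (z ^ (m : ℤ)) (2 * m) = 1 := by
      have := z_even z hz2 hzeven (m - 1)
      rw [show m - 1 + 1 = m by omega] at this
      rw [show (z ^ (m:ℤ)) = (z ^ m : Equiv.Perm ℕ) by rw [zpow_natCast]]
      exact this
    have h2 : (z ^ (-(m:ℤ)) * z ^ (m:ℤ)) (2 * m) = (z ^ (-(m:ℤ))) 1 := by
      rw [Equiv.Perm.mul_apply, key]
    rw [← zpow_add, neg_add_cancel, zpow_zero, Equiv.Perm.one_apply] at h2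
    rw [← h2]; omega
  · refine ⟨(m : ℤ), ?_⟩
    rw [zpow_natCast, z_odd z hzodd]
    omega

lemma swap_form (hz0 : z 0 = 0) (hz2 : z 2 = 1)
    (hzeven : ∀ k : ℕ, k % 2 = 0 → 4 ≤ k → z k = k - 2)
    (hzodd : ∀ k : ℕ, k % 2 = 1 → z k = k + 2)
    (a b : ℕ) (hab : a ≠ b) :
    ∃ i j : ℤ, gConj (gConj (Equiv.swap 0 1) (z ^ i)) (gConj (Equiv.swap 0 1) (z ^ j))
      = Equiv.swap a b := by
  -- first: for any nonzero c, ∃ i, gConj (swap 0 1) (z ^ i) = swap 0 c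
  have base : ∀ c : ℕ, c ≠ 0 → ∃ i : ℤ, gConj (Equiv.swap 0 1) (z ^ i) = Equiv.swap 0 c := by
    intro c hc
    obtain ⟨i, hi⟩ := surj_one z hz2 hzeven hzodd c hc
    refine ⟨-i, ?_⟩
    have h0 : (z ^ i) 0 = 0 := zpow_zero_fix z hz0 i
    have : Equiv.swap ((z ^ i) 0) ((z ^ i) 1) = (z ^ i) * Equiv.swap 0 1 * (z ^ i)⁻¹ :=
      Equiv.swap_apply_apply _ 0 1
    rw [h0, hi] at this
    simp only [gConj, zpow_neg, inv_inv]
    rw [← this]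
  have key : ∀ c d : ℕ, c ≠ 0 → d ≠ 0 → c ≠ d →
      ∃ i j : ℤ, gConj (gConj (Equiv.swap 0 1) (z ^ i)) (gConj (Equiv.swap 0 1) (z ^ j))
        = Equiv.swap c d := by
    intro c d hc hd hcd
    obtain ⟨i, hi⟩ := base d hd
    obtain ⟨j, hj⟩ := base c hc
    refine ⟨i, j, ?_⟩
    rw [hi, hj]
    unfold gConj
    rw [Equiv.swap_inv]
    have : Equiv.swap (Equiv.swap 0 c 0) (Equiv.swap 0 c d)
        = Equiv.swap 0 c * Equiv.swap 0 d * (Equiv.swap 0 c)⁻¹ :=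
      Equiv.swap_apply_apply _ 0 d
    rw [Equiv.swap_apply_left, Equiv.swap_apply_of_ne_of_ne hd (Ne.symm hcd),
      Equiv.swap_inv] at this
    exact this.symm
  rcases eq_or_ne a 0 with rfl | ha
  · obtain ⟨i, hi⟩ := base b (Ne.symm hab)
    exact ⟨i, i, by rw [hi]; unfold gConj; rw [Equiv.swap_inv]; simp⟩
  · rcases eq_or_ne b 0 with rfl | hb
    · obtain ⟨i, hi⟩ := base a ha
      refine ⟨i, i, ?_⟩
      rw [hi]; unfold gConj; rw [Equiv.swap_inv, Equiv.swap_comm a 0]; simp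
    · exact key a b ha hb hab

end aux

/-- With `z` the permutation of `ℕ` given by `z(0)=0`, `z(2)=1`, `z(k)=k−2` for even `k ≥ 4`
and `z(k)=k+2` for odd `k`, and `τ = (0,1)`: every permutation of `ℕ` that is a product of
finitely many disjoint transpositions (an involution with finite support) is a finite
product `∏_{(i,j) ∈ F} (τ^{z^i})^{τ^{z^j}}`. -/
theorem oneInf_twoFin_generation
    (z : Equiv.Perm ℕ)
    (hz0 : z 0 = 0) (hz2 : z 2 = 1)
    (hzeven : ∀ k : ℕ, k % 2 = 0 → 4 ≤ k → z k = k - 2)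
    (hzodd : ∀ k : ℕ, k % 2 = 1 → z k = k + 2)
    (p : Equiv.Perm ℕ) (hp : p * p = 1) (hfin : {x : ℕ | p x ≠ x}.Finite) :
    ∃ F : List (ℤ × ℤ),
      p = (F.map fun ij =>
        gConj (gConj (Equiv.swap 0 1) (z ^ ij.1)) (gConj (Equiv.swap 0 1) (z ^ ij.2))).prod := by
  suffices H : ∀ n : ℕ, ∀ p : Equiv.Perm ℕ, p * p = 1 →
      ∀ h : {x : ℕ | p x ≠ x}.Finite, h.toFinset.card ≤ n →
      ∃ F : List (ℤ × ℤ),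
        p = (F.map fun ij =>
          gConj (gConj (Equiv.swap 0 1) (z ^ ij.1))
            (gConj (Equiv.swap 0 1) (z ^ ij.2))).prod by
    exact H hfin.toFinset.card p hp hfin le_rfl
  intro n
  induction n with
  | zero =>
      intro p hp h hc
      refine ⟨[], ?_⟩
      simp only [List.map_nil, List.prod_nil]
      ext x
      by_contra hx
      have : x ∈ h.toFinset := by simpa using hx
      have := Finset.card_pos.mpr ⟨x, this⟩
      omega
  | succ n ih =>
      intro p hp h hc
      rcases eq_or_ne p 1 with rfl | hp1
      · exact ⟨[], by simp⟩
      · obtain ⟨a, ha⟩ : ∃ a, p a ≠ a := by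
          by_contra hno
          push_neg at hno
          exact hp1 (Equiv.ext hno)
        set b := p a with hb
        have hpb : p b = a := by
          have := congrArg (fun q => q a) hp
          simpa [Equiv.Perm.mul_apply] using this
        have hne : a ≠ b := Ne.symm ha
        set q : Equiv.Perm ℕ := Equiv.swap a b * p with hq
        have hq2 : q * q = 1 := by
          have hconj : p * Equiv.swap a b * p⁻¹ = Equiv.swap (p a) (p b) :=
            (Equiv.swap_apply_apply p a b).symm
          have hpinv : p⁻¹ = p := by
            rw [inv_eq_iff_mul_eq_one]; exact hp
          rw [hpinv] at hconj
          calc q * q = Equiv.swap a b * (p * Equiv.swap a b * p) := by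
                rw [hq]; group
            _ = Equiv.swap a b * Equiv.swap (p a) (p b) := by rw [hconj]
            _ = 1 := by
                rw [← hb, hpb, Equiv.swap_comm b a, Equiv.swap_mul_self]
        have hsub : {x : ℕ | q x ≠ x} ⊆ {x : ℕ | p x ≠ x} \ {a} := by
          intro x hx
          simp only [Set.mem_setOf_eq, hq, Equiv.Perm.mul_apply] at hx
          constructor
          · simp only [Set.mem_setOf_eq]
            intro hpx
            apply hx
            rw [hpx]
            rcases eq_or_ne x a with rfl | hxa
            · exact absurd hpx ha
            · rcases eq_or_ne x b with rfl | hxb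
              · exact absurd (hpb.symm.trans hpx) hne
              · exact Equiv.swap_apply_of_ne_of_ne hxa hxb
          · simp only [Set.mem_singleton_iff]
            rintro rfl
            apply hx
            rw [← hb, Equiv.swap_apply_right]
        have hqfin : {x : ℕ | q x ≠ x}.Finite :=
          (h.diff).subset hsub
        have hcard : hqfin.toFinset.card ≤ n := by
          have h1 : hqfin.toFinset ⊆ h.toFinset.erase a := by
            intro x hx
            have := hsub (hqfin.mem_toFinset.mp hx)
            simp only [Set.mem_diff, Set.mem_singleton_iff] at this
            exact Finset.mem_erase.mpr ⟨this.2, h.mem_toFinset.mpr this.1⟩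
          have h2 := Finset.card_le_card h1
          have h3 : a ∈ h.toFinset := h.mem_toFinset.mpr ha
          have h4 := Finset.card_erase_of_mem h3
          omega
        obtain ⟨F, hF⟩ := ih q hq2 hqfin hcard
        obtain ⟨i, j, hij⟩ := swap_form z hz0 hz2 hzeven hzodd a b hne
        refine ⟨(i, j) :: F, ?_⟩
        rw [List.map_cons, List.prod_cons, hij, ← hF]
        rw [hq, ← mul_assoc, Equiv.swap_mul_self, one_mul]
end

section
/- Let V be a vector space over F with basis (vᵢ)_{i∈ℕ}, and let f be the linear automorphism induced by a permutation of the basis containing infinitely many disjoint 2-cycles. Then for every invertible semilinear map h : V → V and every finite-dimensional subspace W ⊆ V, there exists x ∈ V with x − h⁻¹(f(h(x))) ∉ W. In particular h⁻¹∘f∘h does not have the property that all vectors v − h⁻¹fh(v) lie in a common finite-dimensional subspace. -/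
/-- If `f` is the linear automorphism induced by a permutation of the basis containing
infinitely many disjoint 2-cycles, `h` is any bijective semilinear transformation of `V`
and `W` is any finite-dimensional subspace, then some vector `x` has `x − h⁻¹(f(h(x))) ∉ W`:
the conjugate `h⁻¹ ∘ f ∘ h` does not have all differences in a common finite-dimensional
subspace. -/
theorem conjugate_diff_not_in_finiteDimensional
    (F V : Type*) [Field F] [AddCommGroup V] [Module F V] (b : Module.Basis ℕ F V)
    (p : Equiv.Perm ℕ) (hinv : p * p = 1) (hmove : {i : ℕ | p i ≠ i}.Infinite)
    (σ : F ≃+* F) (h : V ≃+ V) (hsemi : ∀ (a : F) (v : V), h (a • v) = σ a • h v)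
    (W : Submodule F V) (hW : FiniteDimensional F W) :
    ∃ x : V, x - h.symm (b.equiv b p (h x)) ∉ W := by
  by_contra hcon
  push_neg at hcon
  have hpp : ∀ i, p (p i) = i := by
    intro i
    have := congrArg (fun q : Equiv.Perm ℕ => q i) hinv
    simpa using this
  set T : Set ℕ := {i | i < p i} with hTdef
  -- T is infinite
  have hTinf : T.Infinite := by
    have hsub : {i : ℕ | p i ≠ i} ⊆ T ∪ p '' T := by
      intro i hi
      rcases lt_or_gt_of_ne (hi : p i ≠ i) with h1 | h1
      · right
        exact ⟨p i, by simpa [hTdef, hpp i] using h1, hpp i⟩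
      · left; exact h1
    by_contra hfin
    rw [Set.not_infinite] at hfin
    exact hmove (Set.Finite.subset (hfin.union (hfin.image p)) hsub)
  haveI : Infinite T := hTinf.to_subtype
  -- for distinct i, j ∈ T, p i ≠ j
  have hpT : ∀ i j : T, p (i : ℕ) ≠ (j : ℕ) := by
    rintro ⟨i, hi⟩ ⟨j, hj⟩ hij
    have hi' : i < p i := hi
    have hj' : j < p j := hj
    change p i = j at hij
    rw [hij] at hi'
    rw [← hij, hpp i] at hj'
    omega
  -- the family b i - b (p i), i ∈ T, is linearly independent
  have hli : LinearIndependent F (fun i : T => b (i : ℕ) - b (p (i : ℕ))) := by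
    rw [linearIndependent_iff']
    intro s g hsum i₀ hi₀
    have := congrArg (b.coord (i₀ : ℕ)) hsum
    rw [map_sum, map_zero] at this
    rw [← this]
    rw [Finset.sum_eq_single i₀]
    · simp [Module.Basis.coord_apply, Module.Basis.repr_self, (hpT i₀ i₀)]
    · intro i _ hii
      have h1 : (i : ℕ) ≠ (i₀ : ℕ) := fun e => hii (Subtype.ext e)
      simp [Module.Basis.coord_apply, Module.Basis.repr_self, Finsupp.single_apply, h1, hpT i i₀]
    · intro hni; exact absurd hi₀ hni
  -- transport through h.symm
  have hsymm_smul : ∀ (a : F) (v : V), h.symm (σ a • v) = a • h.symm v := by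
    intro a v
    apply h.injective
    rw [h.apply_symm_apply, hsemi, h.apply_symm_apply]
  have hli2 : LinearIndependent F
      (fun i : T => h.symm (b (i : ℕ)) - h.symm (b (p (i : ℕ)))) := by
    rw [linearIndependent_iff']
    intro s g hsum i₀ hi₀
    have hs2 : ∑ i ∈ s, σ (g i) • (b (i : ℕ) - b (p (i : ℕ))) = 0 := by
      have := congrArg h hsum
      rw [map_sum, map_zero] at this
      rw [← this]
      apply Finset.sum_congr rfl
      intro i _
      rw [hsemi, map_sub, h.apply_symm_apply, h.apply_symm_apply]
    have := linearIndependent_iff'.mp hli s (fun i => σ (g i)) hs2 i₀ hi₀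
    exact σ.injective (by simpa using this)
  -- each such vector lies in W
  have hmem : ∀ i : T, h.symm (b (i : ℕ)) - h.symm (b (p (i : ℕ))) ∈ W := by
    intro i
    have := hcon (h.symm (b (i : ℕ)))
    rwa [h.apply_symm_apply, Module.Basis.equiv_apply] at this
  -- contradiction with finite-dimensionality
  let d' : T → W := fun i => ⟨_, hmem i⟩
  have hli3 : LinearIndependent F d' := by
    apply LinearIndependent.of_comp W.subtype
    exact hli2
  exact Module.Finite.not_linearIndependent_of_infinite d' hli3
end

section
/- Let B_η be the interval Boolean algebra of (ℚ,<), let p be a permutation of ℕ of type 1_inf 2_fin, and let φ be the automorphism of B_η induced by p̃ (p̃(x)=x for x<0, p̃(x)=p(⌊x⌋)+{x} for x≥0). Then the set {u ∈ B_η : every nonzero y ≤ u contains a nonzero z ≤ y with φ(z) ≠ z} has a greatest element, namely the join of the finitely many intervals [n, n+1) with p(n) ≠ n. -/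
/-- Membership in the interval Boolean algebra `B_η` of `(ℚ, <)`: the Boolean algebra of
subsets of `ℚ` generated by the left-closed right-open intervals `[a, b)`. -/
inductive InBeta : Set ℚ → Prop
  | ico (a b : ℚ) : InBeta (Set.Ico a b)
  | compl {s : Set ℚ} : InBeta s → InBeta sᶜ
  | union {s t : Set ℚ} : InBeta s → InBeta t → InBeta (s ∪ t)

/-- The map `p̃ : ℚ → ℚ` induced by a permutation `p` of `ℕ`. -/
noncomputable def ptilde (p : Equiv.Perm ℕ) (x : ℚ) : ℚ :=
  if x < 0 then x else (p (Int.floor x).toNat : ℚ) + Int.fract x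

lemma InBeta.empty : InBeta (∅ : Set ℚ) := by
  simpa using InBeta.ico 0 0

lemma InBeta.inter {s t : Set ℚ} (hs : InBeta s) (ht : InBeta t) : InBeta (s ∩ t) := by
  have := (hs.compl.union ht.compl).compl
  simpa [Set.compl_union, compl_compl] using this

lemma InBeta.finsetBiUnion {ι : Type} (s : Finset ι) (f : ι → Set ℚ)
    (hf : ∀ i ∈ s, InBeta (f i)) : InBeta (⋃ i ∈ s, f i) := by
  classical
  induction s using Finset.induction_on with
  | empty => simpa using InBeta.empty
  | insert _ _ h ih =>
      rw [Finset.set_biUnion_insert]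
      exact (hf _ (Finset.mem_insert_self _ _)).union
        (ih fun i hi => hf i (Finset.mem_insert_of_mem hi))

lemma InBeta.biUnion {ι : Type} {s : Set ι} (hs : s.Finite) (f : ι → Set ℚ)
    (hf : ∀ i ∈ s, InBeta (f i)) : InBeta (⋃ i ∈ s, f i) := by
  have h : (⋃ i ∈ s, f i) = ⋃ i ∈ hs.toFinset, f i := by
    ext x; simp [Set.Finite.mem_toFinset]
  rw [h]
  exact InBeta.finsetBiUnion _ _ fun i hi => hf i (hs.mem_toFinset.1 hi)

lemma ptilde_on (p : Equiv.Perm ℕ) (n : ℕ) (x : ℚ)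
    (hx : x ∈ Set.Ico (n : ℚ) ((n : ℚ) + 1)) :
    ptilde p x = (p n : ℚ) + (x - n) := by
  have h0 : ¬ x < 0 := not_lt.2 (le_trans (by positivity) hx.1)
  have hfl : Int.floor x = (n : ℤ) := by
    rw [Int.floor_eq_iff]
    constructor
    · exact_mod_cast hx.1
    · push_cast; exact hx.2
  rw [ptilde, if_neg h0, hfl, Int.toNat_natCast, Int.fract, hfl]
  push_cast; ring

lemma exists_nat_ico (x : ℚ) (hx : ¬ x < 0) :
    ∃ n : ℕ, x ∈ Set.Ico (n : ℚ) ((n : ℚ) + 1) := by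
  have hnn : (0 : ℤ) ≤ ⌊x⌋ := Int.floor_nonneg.2 (not_lt.1 hx)
  have hcast : ((⌊x⌋.toNat : ℕ) : ℚ) = ((⌊x⌋ : ℤ) : ℚ) := by
    exact_mod_cast congrArg (Int.cast : ℤ → ℚ) (Int.toNat_of_nonneg hnn)
  refine ⟨(Int.floor x).toNat, ?_, ?_⟩
  · rw [hcast]; exact Int.floor_le x
  · rw [hcast]; exact Int.lt_floor_add_one x

/-- For a `1_inf 2_fin` permutation `p` of `ℕ`, with `φ` the automorphism of `B_η` induced
by `p̃` (acting by image), the set of `u ∈ B_η` such that every nonzero `y ≤ u` contains a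
nonzero `z ≤ y` moved by `φ` has a greatest element, namely the union of the finitely many
intervals `[n, n+1)` with `p(n) ≠ n`. -/
theorem moved_part_has_greatest
    (p : Equiv.Perm ℕ) (hinv : p * p = 1) (hfin : {n : ℕ | p n ≠ n}.Finite) :
    ∃ U : Set ℚ, InBeta U ∧
      U = (⋃ n ∈ {n : ℕ | p n ≠ n}, Set.Ico (n : ℚ) ((n : ℚ) + 1)) ∧
      IsGreatest {u : Set ℚ | InBeta u ∧
        ∀ y : Set ℚ, InBeta y → y ⊆ u → y ≠ ∅ →
          ∃ z : Set ℚ, InBeta z ∧ z ⊆ y ∧ z ≠ ∅ ∧ ptilde p '' z ≠ z} U := by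
  classical
  set M : Set ℕ := {n : ℕ | p n ≠ n} with hM
  set U : Set ℚ := ⋃ n ∈ M, Set.Ico (n : ℚ) ((n : ℚ) + 1) with hU
  have hUB : InBeta U := InBeta.biUnion hfin _ (fun n _ => InBeta.ico _ _)
  -- points outside U are fixed by ptilde
  have hfix : ∀ x : ℚ, x ∉ U → ptilde p x = x := by
    intro x hx
    by_cases h0 : x < 0
    · rw [ptilde, if_pos h0]
    · obtain ⟨n, hn⟩ := exists_nat_ico x h0
      have hpn : p n = n := by
        by_contra hpn
        exact hx (Set.mem_biUnion hpn hn)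
      rw [ptilde_on p n x hn, hpn]; ring
  refine ⟨U, hUB, rfl, ⟨hUB, ?_⟩, ?_⟩
  · -- U itself is in the set
    intro y hy hyU hyne
    obtain ⟨x, hx⟩ := Set.nonempty_iff_ne_empty.2 hyne
    obtain ⟨n, hnM, hxn⟩ := Set.mem_iUnion₂.1 (hyU hx)
    refine ⟨y ∩ Set.Ico (n : ℚ) ((n : ℚ) + 1), hy.inter (InBeta.ico _ _),
      Set.inter_subset_left, ?_, ?_⟩
    · exact Set.nonempty_iff_ne_empty.1 ⟨x, hx, hxn⟩
    · intro heq
      -- x is in the image, so x ∈ Ico (p n) (p n + 1), but also x ∈ Ico n (n+1)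
      have hximg : x ∈ ptilde p '' (y ∩ Set.Ico (n : ℚ) ((n : ℚ) + 1)) := by
        rw [heq]; exact ⟨hx, hxn⟩
      obtain ⟨w, hw, hwx⟩ := hximg
      have hweq : ptilde p w = (p n : ℚ) + (w - n) := ptilde_on p n w hw.2
      have h1 : (p n : ℚ) ≤ x := by
        rw [← hwx, hweq]; linarith [hw.2.1]
      have h2 : x < (p n : ℚ) + 1 := by
        rw [← hwx, hweq]; linarith [hw.2.2]
      have hle1 : n ≤ p n := by
        have : (n : ℚ) < (p n : ℚ) + 1 := lt_of_le_of_lt hxn.1 h2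
        exact_mod_cast Nat.lt_add_one_iff.1 (by exact_mod_cast this)
      have hle2 : p n ≤ n := by
        have : (p n : ℚ) < (n : ℚ) + 1 := lt_of_le_of_lt h1 hxn.2
        exact_mod_cast Nat.lt_add_one_iff.1 (by exact_mod_cast this)
      exact hnM (le_antisymm hle2 hle1)
  · -- upper bound
    rintro u ⟨hu, hprop⟩ x hxu
    by_contra hxU
    obtain ⟨z, _, hzsub, hzne, hzmoved⟩ :=
      hprop (u ∩ Uᶜ) (hu.inter hUB.compl) Set.inter_subset_left
        (Set.nonempty_iff_ne_empty.1 ⟨x, hxu, hxU⟩)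
    apply hzmoved
    have : ∀ w ∈ z, ptilde p w = w := fun w hw => hfix w (hzsub hw).2
    calc ptilde p '' z = id '' z := Set.image_congr this
      _ = z := Set.image_id z
end

section
/- Let B_η be the interval Boolean algebra of (ℚ,<), let p be a permutation of ℕ of type 1_inf 2_inf, and let φ be the automorphism of B_η induced by p̃. Then the set {u ∈ B_η : every nonzero y ≤ u contains a nonzero z ≤ y with φ(z) ≠ z} has no supremum in B_η. -/
/-- Every set in `B_η` is eventually constant. -/
lemma InBeta.evc {s : Set ℚ} (hs : InBeta s) :
    ∃ N : ℚ, (∀ x, N ≤ x → x ∈ s) ∨ (∀ x, N ≤ x → x ∉ s) := by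
  induction hs with
  | ico a b =>
    exact ⟨b, Or.inr fun x hx hmem => absurd hmem.2 (not_lt.mpr hx)⟩
  | compl h ih =>
    obtain ⟨N, hN⟩ := ih
    refine ⟨N, ?_⟩
    rcases hN with h1 | h1
    · exact Or.inr fun x hx => by simpa using h1 x hx
    · exact Or.inl fun x hx => h1 x hx
  | union h1 h2 ih1 ih2 =>
    obtain ⟨N1, hN1⟩ := ih1
    obtain ⟨N2, hN2⟩ := ih2
    refine ⟨max N1 N2, ?_⟩
    rcases hN1 with h1 | h1
    · exact Or.inl fun x hx => Or.inl (h1 x (le_trans (le_max_left _ _) hx))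
    · rcases hN2 with h2 | h2
      · exact Or.inl fun x hx => Or.inr (h2 x (le_trans (le_max_right _ _) hx))
      · exact Or.inr fun x hx hmem => hmem.elim
          (h1 x (le_trans (le_max_left _ _) hx))
          (h2 x (le_trans (le_max_right _ _) hx))

lemma floor_of_mem_Ico {n : ℕ} {x : ℚ} (hx : x ∈ Set.Ico (n : ℚ) ((n : ℚ) + 1)) :
    ⌊x⌋ = (n : ℤ) := by
  exact Int.floor_eq_iff.mpr (by push_cast; exact ⟨hx.1, hx.2⟩)

lemma ptilde_of_mem_Ico (p : Equiv.Perm ℕ) {n : ℕ} {x : ℚ}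
    (hx : x ∈ Set.Ico (n : ℚ) ((n : ℚ) + 1)) :
    ptilde p x = (p n : ℚ) + Int.fract x := by
  have h0 : (0 : ℚ) ≤ x := le_trans (by exact_mod_cast Nat.zero_le n) hx.1
  have hfl : ⌊x⌋ = (n : ℤ) := floor_of_mem_Ico hx
  simp [ptilde, not_lt.mpr h0, hfl]

lemma floor_ptilde_of_mem_Ico (p : Equiv.Perm ℕ) {n : ℕ} {x : ℚ}
    (hx : x ∈ Set.Ico (n : ℚ) ((n : ℚ) + 1)) :
    ⌊ptilde p x⌋ = (p n : ℤ) := by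
  rw [ptilde_of_mem_Ico p hx]
  have h1 : (0 : ℚ) ≤ Int.fract x := Int.fract_nonneg x
  have h2 : Int.fract x < 1 := Int.fract_lt_one x
  apply floor_of_mem_Ico (n := p n)
  constructor <;> [linarith; linarith]

/-- For a `1_inf 2_inf` permutation `p` of `ℕ`, with `φ` the automorphism of `B_η` induced
by `p̃` (acting by image), the set of `u ∈ B_η` such that every nonzero `y ≤ u` contains a
nonzero `z ≤ y` moved by `φ` has no supremum in `B_η`. -/
theorem moved_part_has_no_sup
    (p : Equiv.Perm ℕ) (hinv : p * p = 1)
    (hmove : {n : ℕ | p n ≠ n}.Infinite) (hfix : {n : ℕ | p n = n}.Infinite) :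
    ¬ ∃ u : Set ℚ, InBeta u ∧
        (∀ s ∈ {u : Set ℚ | InBeta u ∧
          ∀ y : Set ℚ, InBeta y → y ⊆ u → y ≠ ∅ →
            ∃ z : Set ℚ, InBeta z ∧ z ⊆ y ∧ z ≠ ∅ ∧ ptilde p '' z ≠ z}, s ⊆ u) ∧
        (∀ u' : Set ℚ, InBeta u' →
          (∀ s ∈ {u : Set ℚ | InBeta u ∧
            ∀ y : Set ℚ, InBeta y → y ⊆ u → y ≠ ∅ →
              ∃ z : Set ℚ, InBeta z ∧ z ⊆ y ∧ z ≠ ∅ ∧ ptilde p '' z ≠ z}, s ⊆ u') →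
          u ⊆ u') := by
  rintro ⟨u, hu, hub, hlub⟩
  -- Step 1: for every moved n, the interval [n, n+1) is in S, hence (n:ℚ) ∈ u.
  have hmem_u : ∀ n : ℕ, p n ≠ n → (n : ℚ) ∈ u := by
    intro n hn
    have hS : Set.Ico (n : ℚ) ((n : ℚ) + 1) ∈ {u : Set ℚ | InBeta u ∧
        ∀ y : Set ℚ, InBeta y → y ⊆ u → y ≠ ∅ →
          ∃ z : Set ℚ, InBeta z ∧ z ⊆ y ∧ z ≠ ∅ ∧ ptilde p '' z ≠ z} := by
      refine ⟨InBeta.ico _ _, fun y hy hysub hyne => ⟨y, hy, subset_rfl, hyne, ?_⟩⟩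
      intro heq
      obtain ⟨x, hx⟩ := Set.nonempty_iff_ne_empty.mpr hyne
      have hxI : x ∈ Set.Ico (n : ℚ) ((n : ℚ) + 1) := hysub hx
      have himg : ptilde p x ∈ y := heq ▸ Set.mem_image_of_mem _ hx
      have h1 : ⌊ptilde p x⌋ = (p n : ℤ) := floor_ptilde_of_mem_Ico p hxI
      have h2 : ⌊ptilde p x⌋ = (n : ℤ) := floor_of_mem_Ico (hysub himg)
      exact hn (by exact_mod_cast h1.symm.trans h2)
    exact hub _ hS ⟨le_refl _, by linarith⟩
  -- Step 2: for every fixed m, (m:ℚ) ∉ u.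
  have hnotmem_u : ∀ m : ℕ, p m = m → (m : ℚ) ∉ u := by
    intro m hm hmu
    set I := Set.Ico (m : ℚ) ((m : ℚ) + 1) with hI
    have hu' : InBeta (u ∩ Iᶜ) := hu.inter (InBeta.ico _ _).compl
    have hub' : ∀ s ∈ {u : Set ℚ | InBeta u ∧
        ∀ y : Set ℚ, InBeta y → y ⊆ u → y ≠ ∅ →
          ∃ z : Set ℚ, InBeta z ∧ z ⊆ y ∧ z ≠ ∅ ∧ ptilde p '' z ≠ z}, s ⊆ u ∩ Iᶜ := by
      rintro s ⟨hsB, hsS⟩ x hxs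
      refine ⟨hub s ⟨hsB, hsS⟩ hxs, fun hxI => ?_⟩
      -- s meets I: derive a contradiction since p̃ is the identity on I.
      have hyne : s ∩ I ≠ ∅ := Set.nonempty_iff_ne_empty.mp ⟨x, hxs, hxI⟩
      obtain ⟨z, hzB, hzsub, hzne, hzmoved⟩ :=
        hsS (s ∩ I) (hsB.inter (InBeta.ico _ _)) Set.inter_subset_left hyne
      apply hzmoved
      have hid : ∀ w ∈ z, ptilde p w = w := by
        intro w hw
        have hwI : w ∈ I := (hzsub hw).2
        have hfl : ⌊w⌋ = (m : ℤ) := floor_of_mem_Ico hwI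
        rw [ptilde_of_mem_Ico p hwI, hm, Int.fract, hfl]
        push_cast
        ring
      calc ptilde p '' z = id '' z := Set.image_congr hid
        _ = z := Set.image_id z
    have := hlub _ hu' hub' hmu
    exact this.2 ⟨le_refl _, by linarith⟩
  -- Step 3: u is eventually constant, contradiction with infinitude of both sets.
  obtain ⟨N, hN⟩ := hu.evc
  obtain ⟨M, hM⟩ := exists_nat_ge N
  rcases hN with hfull | hempty
  · obtain ⟨m, hmS, hmM⟩ := hfix.exists_gt M
    exact hnotmem_u m hmS (hfull _ (le_trans hM (by exact_mod_cast hmM.le)))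
  · obtain ⟨n, hnS, hnM⟩ := hmove.exists_gt M
    exact hempty _ (le_trans hM (by exact_mod_cast hnM.le)) (hmem_u n hnS)
end

section
/- Every automorphism of the lattice of all subspaces of an infinite-dimensional vector space V over a field F (with dim V ≥ 3) is induced by a bijective semilinear transformation of V, and two semilinear transformations induce the same lattice automorphism if and only if they differ by multiplication by a nonzero scalar (after matching field automorphisms). -/
open Submodule

namespace FTPG
variable {F V : Type*} [Field F] [AddCommGroup V] [Module F V]

/-- Pair of linearly independent vectors. -/
def Ind2 (F : Type*) {V : Type*} [Field F] [AddCommGroup V] [Module F V] (u v : V) : Prop :=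
  ∀ a b : F, a • u + b • v = 0 → a = 0 ∧ b = 0

/-- Triple of linearly independent vectors. -/
def Ind3 (F : Type*) {V : Type*} [Field F] [AddCommGroup V] [Module F V] (t u v : V) : Prop :=
  ∀ a b c : F, a • t + b • u + c • v = 0 → a = 0 ∧ b = 0 ∧ c = 0

lemma Ind2.left_ne {u v : V} (h : Ind2 F u v) : u ≠ 0 := by
  intro hu
  have := h 1 0 (by simp [hu])
  simpa using this.1

lemma Ind2.right_ne {u v : V} (h : Ind2 F u v) : v ≠ 0 := by
  intro hv
  have := h 0 1 (by simp [hv])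
  simpa using this.2

lemma Ind2.symm {u v : V} (h : Ind2 F u v) : Ind2 F v u := by
  intro a b hab
  have := h b a (by rw [← hab]; abel)
  exact ⟨this.2, this.1⟩

lemma Ind2.add_ne {u v : V} (h : Ind2 F u v) : u + v ≠ 0 := by
  intro huv
  have := h 1 1 (by simpa using huv)
  simpa using this.1

lemma Ind3.ind2_12 {t u v : V} (h : Ind3 F t u v) : Ind2 F t u := by
  intro a b hab
  have := h a b 0 (by simpa using hab)
  exact ⟨this.1, this.2.1⟩

lemma Ind3.ind2_13 {t u v : V} (h : Ind3 F t u v) : Ind2 F t v := by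
  intro a b hab
  have := h a 0 b (by simpa using hab)
  exact ⟨this.1, this.2.2⟩

lemma Ind3.ind2_23 {t u v : V} (h : Ind3 F t u v) : Ind2 F u v := by
  intro a b hab
  have := h 0 a b (by simpa using hab)
  exact ⟨this.2.1, this.2.2⟩

lemma ind2_of_not_mem_span {u v : V} (hu : u ≠ 0) (hv : v ∉ span F ({u} : Set V)) :
    Ind2 F u v := by
  intro a b hab
  rcases eq_or_ne b 0 with hb | hb
  · subst hb
    simp only [zero_smul, add_zero] at hab
    exact ⟨by rcases smul_eq_zero.1 hab with h | h; exact h; exact absurd h hu, rfl⟩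
  · exfalso
    apply hv
    rw [mem_span_singleton]
    refine ⟨-(b⁻¹ * a), ?_⟩
    have hbv : b • v = -(a • u) := by linear_combination (norm := module) hab
    have : v = b⁻¹ • (b • v) := by rw [smul_smul, inv_mul_cancel₀ hb, one_smul]
    rw [this, hbv]
    rw [smul_neg, smul_smul, neg_smul]

lemma Ind2.not_mem_span {u v : V} (h : Ind2 F u v) : v ∉ span F ({u} : Set V) := by
  intro hv
  rw [mem_span_singleton] at hv
  obtain ⟨c, rfl⟩ := hv
  have := h (-c) 1 (by rw [one_smul, neg_smul]; abel)
  exact one_ne_zero this.2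

lemma ind3_of_not_mem_span {t u v : V} (h : Ind2 F t u)
    (hv : v ∉ (span F ({t} : Set V) ⊔ span F ({u} : Set V))) : Ind3 F t u v := by
  intro a b c habc
  rcases eq_or_ne c 0 with hc | hc
  · subst hc
    have := h a b (by simpa using habc)
    exact ⟨this.1, this.2, rfl⟩
  · exfalso
    apply hv
    have hv' : v = c⁻¹ • (c • v) := by rw [smul_smul, inv_mul_cancel₀ hc, one_smul]
    have hcv : c • v = -(a • t) - b • u := by linear_combination (norm := module) habc
    rw [hv', hcv]
    exact smul_mem _ _ (sub_mem
      (neg_mem (mem_sup_left (smul_mem _ _ (mem_span_singleton_self t))))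
      (mem_sup_right (smul_mem _ _ (mem_span_singleton_self u))))

-- span identities
lemma span_add_le (u v : V) :
    span F ({u + v} : Set V) ≤ span F ({u} : Set V) ⊔ span F ({v} : Set V) := by
  rw [span_le, Set.singleton_subset_iff]
  exact add_mem (mem_sup_left (mem_span_singleton_self u))
    (mem_sup_right (mem_span_singleton_self v))

lemma span_inf_eq_bot {u v : V} (h : Ind2 F u v) :
    span F ({u} : Set V) ⊓ span F ({v} : Set V) = ⊥ := by
  rw [eq_bot_iff]
  intro x hx
  rw [Submodule.mem_inf] at hx
  obtain ⟨hxu, hxv⟩ := hx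
  rw [mem_span_singleton] at hxu hxv
  obtain ⟨a, rfl⟩ := hxu
  obtain ⟨b, hb⟩ := hxv
  have := h a (-b) (by rw [neg_smul, hb]; abel)
  simp [this.1]

lemma span_add_inf_left {u v : V} (h : Ind2 F u v) :
    span F ({u + v} : Set V) ⊓ span F ({u} : Set V) = ⊥ := by
  rw [eq_bot_iff]
  intro x hx
  rw [Submodule.mem_inf] at hx
  obtain ⟨hx1, hx2⟩ := hx
  rw [mem_span_singleton] at hx1 hx2
  obtain ⟨a, rfl⟩ := hx1
  obtain ⟨b, hb⟩ := hx2
  have : (a - b) • u + a • v = 0 := by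
    have := hb.symm
    rw [smul_add] at this
    linear_combination (norm := module) this
  have := h _ _ this
  simp [this.2]

lemma span_add_inf_right {u v : V} (h : Ind2 F u v) :
    span F ({u + v} : Set V) ⊓ span F ({v} : Set V) = ⊥ := by
  have := span_add_inf_left (F := F) h.symm
  rwa [add_comm v u] at this

lemma span_sum3 {t u v : V} (h : Ind3 F t u v) :
    span F ({t + u + v} : Set V) =
      (span F ({t + u} : Set V) ⊔ span F ({v} : Set V)) ⊓
      (span F ({t + v} : Set V) ⊔ span F ({u} : Set V)) := by
  apply le_antisymm
  · refine le_inf ?_ ?_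
    · rw [span_le, Set.singleton_subset_iff]
      exact add_mem (mem_sup_left (mem_span_singleton_self _))
        (mem_sup_right (mem_span_singleton_self v))
    · rw [span_le, Set.singleton_subset_iff]
      have : t + u + v = (t + v) + u := by abel
      rw [this]
      exact add_mem (mem_sup_left (mem_span_singleton_self _))
        (mem_sup_right (mem_span_singleton_self u))
  · intro x hx
    rw [Submodule.mem_inf] at hx
    obtain ⟨hx1, hx2⟩ := hx
    rw [mem_sup] at hx1 hx2
    obtain ⟨y1, hy1, z1, hz1, rfl⟩ := hx1
    obtain ⟨y2, hy2, z2, hz2, hx⟩ := hx2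
    rw [mem_span_singleton] at hy1 hz1 hy2 hz2
    obtain ⟨a, rfl⟩ := hy1
    obtain ⟨b, rfl⟩ := hz1
    obtain ⟨c, rfl⟩ := hy2
    obtain ⟨d, rfl⟩ := hz2
    have key : (a - c) • t + (a - d) • u + (b - c) • v = 0 := by
      linear_combination (norm := module) hx.symm
    obtain ⟨h1, h2, h3⟩ := h _ _ _ key
    have hac : a = c := sub_eq_zero.1 h1
    have hba : b = a := by rw [sub_eq_zero.1 h3, ← hac]
    rw [mem_span_singleton]
    exact ⟨a, by rw [hba]; module⟩

lemma span_sum_of3 {t u v : V} (h : Ind3 F t u v) :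
    span F ({u + v} : Set V) =
      (span F ({t + u + v} : Set V) ⊔ span F ({t} : Set V)) ⊓
      (span F ({u} : Set V) ⊔ span F ({v} : Set V)) := by
  apply le_antisymm
  · refine le_inf ?_ ?_
    · rw [span_le, Set.singleton_subset_iff]
      have : u + v = (t + u + v) + (-1 : F) • t := by module
      rw [this]
      exact add_mem (mem_sup_left (mem_span_singleton_self _))
        (mem_sup_right (smul_mem _ _ (mem_span_singleton_self t)))
    · exact span_add_le u v
  · intro x hx
    rw [Submodule.mem_inf] at hx
    obtain ⟨hx1, hx2⟩ := hx
    rw [mem_sup] at hx1 hx2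
    obtain ⟨y1, hy1, z1, hz1, rfl⟩ := hx1
    obtain ⟨y2, hy2, z2, hz2, hx⟩ := hx2
    rw [mem_span_singleton] at hy1 hz1 hy2 hz2
    obtain ⟨a, rfl⟩ := hy1
    obtain ⟨b, rfl⟩ := hz1
    obtain ⟨c, rfl⟩ := hy2
    obtain ⟨d, rfl⟩ := hz2
    have key : (a + b) • t + (a - c) • u + (a - d) • v = 0 := by
      linear_combination (norm := module) hx.symm
    obtain ⟨h1, h2, h3⟩ := h _ _ _ key
    have hb' : b = -a := eq_neg_of_add_eq_zero_right h1
    rw [mem_span_singleton]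
    exact ⟨a, by rw [hb']; module⟩

lemma isAtom_span_singleton {v : V} (hv : v ≠ 0) : IsAtom (span F ({v} : Set V)) := by
  constructor
  · simpa [span_singleton_eq_bot] using hv
  · intro W hW
    by_contra hW0
    obtain ⟨x, hxW, hx0⟩ := exists_mem_ne_zero_of_ne_bot hW0
    have hxv : x ∈ span F ({v} : Set V) := hW.le hxW
    rw [mem_span_singleton] at hxv
    obtain ⟨c, rfl⟩ := hxv
    have hc : c ≠ 0 := by rintro rfl; simp at hx0
    have : v ∈ W := by
      have : v = c⁻¹ • (c • v) := by rw [smul_smul, inv_mul_cancel₀ hc, one_smul]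
      rw [this]; exact W.smul_mem _ hxW
    exact absurd (le_antisymm hW.le ((span_le.2 (Set.singleton_subset_iff.2 this)))) hW.ne

lemma atom_eq_span_of_mem {W : Submodule F V} (hW : IsAtom W) {x : V}
    (hx : x ∈ W) (hx0 : x ≠ 0) : W = span F ({x} : Set V) := by
  rcases (lt_or_eq_of_le (span_le.2 (Set.singleton_subset_iff.2 hx))).symm with h | h
  · exact h.symm
  · exact absurd (hW.2 _ h) (by simpa [span_singleton_eq_bot] using hx0)

section Lattice
variable (Λ : Submodule F V ≃o Submodule F V)

lemma map_span_isAtom {v : V} (hv : v ≠ 0) : IsAtom (Λ (span F ({v} : Set V))) :=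
  (Λ.isAtom_iff _).2 (isAtom_span_singleton hv)

lemma map_inf_bot {u v : V} (h : Ind2 F u v) :
    Λ (span F ({u} : Set V)) ⊓ Λ (span F ({v} : Set V)) = ⊥ := by
  rw [← Λ.map_inf, span_inf_eq_bot h, Λ.map_bot]

lemma partner_ne_zero {u v u' w : V} (huv : Ind2 F u v)
    (hu'0 : u' ≠ 0) (hu' : u' ∈ Λ (span F ({u} : Set V)))
    (hw : w ∈ Λ (span F ({v} : Set V)))
    (hsum : u' + w ∈ Λ (span F ({u + v} : Set V))) : w ≠ 0 := by
  rintro rfl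
  rw [add_zero] at hsum
  have : u' ∈ Λ (span F ({u + v} : Set V)) ⊓ Λ (span F ({u} : Set V)) := ⟨hsum, hu'⟩
  rw [← Λ.map_inf, span_add_inf_left huv, Λ.map_bot] at this
  exact hu'0 this

lemma existsUnique_partner {u v u' : V} (huv : Ind2 F u v)
    (hu' : u' ∈ Λ (span F ({u} : Set V))) (hu'0 : u' ≠ 0) :
    ∃! w, w ∈ Λ (span F ({v} : Set V)) ∧ u' + w ∈ Λ (span F ({u + v} : Set V)) := by
  have hbot : Λ (span F ({u} : Set V)) ⊓ Λ (span F ({v} : Set V)) = ⊥ := map_inf_bot Λ huv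
  have hAne : Λ (span F ({u + v} : Set V)) ≠ ⊥ := by
    intro hbot'
    have : span F ({u + v} : Set V) = ⊥ := Λ.injective (by rw [hbot', Λ.map_bot])
    exact huv.add_ne (span_singleton_eq_bot.1 this)
  obtain ⟨z, hz, hz0⟩ : ∃ z ∈ Λ (span F ({u + v} : Set V)), z ≠ 0 :=
    exists_mem_ne_zero_of_ne_bot hAne
  have hzsup : z ∈ Λ (span F ({u} : Set V)) ⊔ Λ (span F ({v} : Set V)) := by
    rw [← Λ.map_sup]
    exact Λ.monotone (span_add_le u v) hz
  rw [mem_sup] at hzsup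
  obtain ⟨p, hp, q, hq, hpq⟩ := hzsup
  have hp0 : p ≠ 0 := by
    rintro rfl
    rw [zero_add] at hpq
    have : z ∈ Λ (span F ({u + v} : Set V)) ⊓ Λ (span F ({v} : Set V)) := ⟨hz, hpq ▸ hq⟩
    rw [← Λ.map_inf, span_add_inf_right huv, Λ.map_bot] at this
    exact hz0 this
  have hatom : Λ (span F ({u} : Set V)) = span F ({p} : Set V) :=
    atom_eq_span_of_mem (map_span_isAtom Λ huv.left_ne) hp hp0
  have hu'p : u' ∈ span F ({p} : Set V) := hatom ▸ hu'
  rw [mem_span_singleton] at hu'p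
  obtain ⟨c, hc⟩ := hu'p
  have hc0 : c ≠ 0 := by rintro rfl; simp at hc; exact hu'0 hc.symm
  refine ⟨c • q, ⟨Submodule.smul_mem _ _ hq, ?_⟩, ?_⟩
  · have : u' + c • q = c • z := by rw [← hc, ← hpq]; module
    rw [this]
    exact Submodule.smul_mem _ _ hz
  · rintro w₂ ⟨hw₂, hsum₂⟩
    -- uniqueness: compare with w₁ := c • q
    set w₁ := c • q with hw₁def
    have hw₁ : w₁ ∈ Λ (span F ({v} : Set V)) := Submodule.smul_mem _ _ hq
    have hsum₁ : u' + w₁ ∈ Λ (span F ({u + v} : Set V)) := by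
      have : u' + c • q = c • z := by rw [← hc, ← hpq]; module
      rw [hw₁def, this]
      exact Submodule.smul_mem _ _ hz
    have hne₁ : u' + w₁ ≠ 0 := by
      intro hsumz
      have hu'v : u' = -w₁ := by linear_combination (norm := module) hsumz
      have : u' ∈ Λ (span F ({u} : Set V)) ⊓ Λ (span F ({v} : Set V)) :=
        ⟨hu', by rw [hu'v]; exact neg_mem hw₁⟩
      rw [hbot] at this
      exact hu'0 this
    have hAspan : Λ (span F ({u + v} : Set V)) = span F ({u' + w₁} : Set V) :=
      atom_eq_span_of_mem (map_span_isAtom Λ huv.add_ne) hsum₁ hne₁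
    have : u' + w₂ ∈ span F ({u' + w₁} : Set V) := hAspan ▸ hsum₂
    rw [mem_span_singleton] at this
    obtain ⟨d, hd⟩ := this
    have hkey : (1 - d) • u' = d • w₁ - w₂ := by
      linear_combination (norm := module) (-1 : F) • hd
    have : (1 - d) • u' ∈ Λ (span F ({u} : Set V)) ⊓ Λ (span F ({v} : Set V)) :=
      ⟨Submodule.smul_mem _ _ hu', by
        rw [hkey]; exact sub_mem (Submodule.smul_mem _ _ hw₁) hw₂⟩
    rw [hbot] at this
    have hd1 : d = 1 := by
      by_contra hd1
      have h1d : (1 : F) - d ≠ 0 := sub_ne_zero.2 (Ne.symm hd1)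
      exact hu'0 (by
        have := smul_eq_zero.1 this
        tauto)
    rw [hd1, one_smul] at hd
    exact add_left_cancel hd.symm

lemma transport {a b v a' b' c₁ c₂ : V} (h3 : Ind3 F a b v)
    (ha' : a' ∈ Λ (span F ({a} : Set V))) (ha'0 : a' ≠ 0)
    (hb' : b' ∈ Λ (span F ({b} : Set V)))
    (hab : a' + b' ∈ Λ (span F ({a + b} : Set V)))
    (hc₁ : c₁ ∈ Λ (span F ({v} : Set V)))
    (hac : a' + c₁ ∈ Λ (span F ({a + v} : Set V)))
    (hc₂ : c₂ ∈ Λ (span F ({v} : Set V)))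
    (hbc : b' + c₂ ∈ Λ (span F ({b + v} : Set V))) : c₁ = c₂ := by
  have hb'0 : b' ≠ 0 := partner_ne_zero Λ h3.ind2_12 ha'0 ha' hb' hab
  have hx : a' + b' + c₁ ∈ Λ (span F ({a + b + v} : Set V)) := by
    rw [span_sum3 h3, Λ.map_inf, Λ.map_sup, Λ.map_sup]
    constructor
    · exact add_mem (mem_sup_left hab) (mem_sup_right hc₁)
    · have : a' + b' + c₁ = (a' + c₁) + b' := by abel
      rw [this]
      exact add_mem (mem_sup_left hac) (mem_sup_right hb')
  have hbc₁ : b' + c₁ ∈ Λ (span F ({b + v} : Set V)) := by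
    rw [span_sum_of3 h3, Λ.map_inf, Λ.map_sup, Λ.map_sup]
    constructor
    · have : b' + c₁ = (a' + b' + c₁) + (-1 : F) • a' := by module
      rw [this]
      exact add_mem (mem_sup_left hx) (mem_sup_right (Submodule.smul_mem _ _ ha'))
    · exact add_mem (mem_sup_left hb') (mem_sup_right hc₁)
  have huniq := existsUnique_partner Λ h3.ind2_23 hb' hb'0
  exact huniq.unique ⟨hc₁, hbc₁⟩ ⟨hc₂, hbc⟩

end Lattice

lemma exists_not_mem_span (hinf : ¬ FiniteDimensional F V) (s : Set V) (hs : s.Finite) :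
    ∃ x : V, x ∉ span F s := by
  by_contra h
  push_neg at h
  have hts : span F s = ⊤ := eq_top_iff.2 fun x _ => h x
  exact hinf ⟨⟨hs.toFinset, by rwa [Set.Finite.coe_toFinset]⟩⟩

lemma not_mem_span_pair {s : Set V} {x a b : V} (ha : a ∈ s) (hb : b ∈ s)
    (hx : x ∉ span F s) : x ∉ span F ({a} : Set V) ⊔ span F ({b} : Set V) := fun h =>
  hx ((sup_le (span_mono (Set.singleton_subset_iff.2 ha))
    (span_mono (Set.singleton_subset_iff.2 hb)) :
      span F ({a} : Set V) ⊔ span F ({b} : Set V) ≤ span F s) h)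

lemma not_mem_span_single {s : Set V} {x a : V} (ha : a ∈ s)
    (hx : x ∉ span F s) : x ∉ span F ({a} : Set V) := fun h =>
  hx (span_mono (Set.singleton_subset_iff.2 ha) h)

lemma ind3_of_not_mem_span' {t u v : V} (h : Ind2 F u v)
    (ht : t ∉ span F ({u} : Set V) ⊔ span F ({v} : Set V)) : Ind3 F t u v := by
  intro a b c habc
  rcases eq_or_ne a 0 with ha | ha
  · subst ha
    rw [zero_smul, zero_add] at habc
    have := h _ _ habc
    exact ⟨rfl, this.1, this.2⟩
  · exfalso
    apply ht
    have : t = a⁻¹ • (a • t) := by rw [smul_smul, inv_mul_cancel₀ ha, one_smul]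
    have hat : a • t = -(b • u) - c • v := by linear_combination (norm := module) habc
    rw [this, hat]
    exact smul_mem _ _ (sub_mem
      (neg_mem (mem_sup_left (smul_mem _ _ (mem_span_singleton_self u))))
      (mem_sup_right (smul_mem _ _ (mem_span_singleton_self v))))

lemma ind2_of_mem_span {e f v : V} (hf : f ∉ span F ({e} : Set V))
    (hv : v ∈ span F ({e} : Set V)) (hv0 : v ≠ 0) : Ind2 F f v := by
  rw [mem_span_singleton] at hv
  obtain ⟨c, rfl⟩ := hv
  have hc : c ≠ 0 := fun h => hv0 (by simp [h])
  intro a b hab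
  rcases eq_or_ne a 0 with ha | ha
  · subst ha
    rw [zero_smul, zero_add] at hab
    exact ⟨rfl, by rcases smul_eq_zero.1 hab with h | h; exact h; exact absurd h hv0⟩
  · exfalso
    apply hf
    rw [mem_span_singleton]
    refine ⟨-(a⁻¹ * (b * c)), ?_⟩
    have hfe : a • f = -((b * c) • e) := by
      have : a • f + (b * c) • e = 0 := by
        rw [← hab]; module
      linear_combination (norm := module) this
    have : f = a⁻¹ • (a • f) := by rw [smul_smul, inv_mul_cancel₀ ha, one_smul]
    rw [this, hfe, smul_neg, smul_smul, neg_smul]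

lemma not_mem_span_add {t u v : V}
    (ht : t ∉ span F ({u} : Set V) ⊔ span F ({v} : Set V)) :
    t ∉ span F ({u + v} : Set V) := fun h => ht (span_add_le u v h)

lemma map_span_ne_bot (Λ : Submodule F V ≃o Submodule F V) {v : V} (hv : v ≠ 0) :
    Λ (span F ({v} : Set V)) ≠ ⊥ := by
  intro hbot'
  have : span F ({v} : Set V) = ⊥ := Λ.injective (by rw [hbot', Λ.map_bot])
  exact hv (span_singleton_eq_bot.1 this)

lemma exists_semilinear (hinf : ¬ FiniteDimensional F V)
    (Λ : Submodule F V ≃o Submodule F V) :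
    ∃ (σ : F ≃+* F) (μ : V ≃+ V),
      (∀ (a : F) (v : V), μ (a • v) = σ a • μ v) ∧
      ∀ W : Submodule F V, (Λ W : Set V) = μ '' (W : Set V) := by
  classical
  -- basic vectors
  obtain ⟨e, he⟩ : ∃ e : V, e ≠ 0 := by
    obtain ⟨x, hx⟩ := exists_not_mem_span hinf ∅ Set.finite_empty
    exact ⟨x, fun h => hx (by rw [h]; exact zero_mem _)⟩
  obtain ⟨e', he'mem, he'0⟩ : ∃ x ∈ Λ (span F ({e} : Set V)), x ≠ 0 :=
    exists_mem_ne_zero_of_ne_bot (map_span_ne_bot Λ he)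
  obtain ⟨f, hf⟩ := exists_not_mem_span hinf {e} (Set.finite_singleton e)
  have hef : Ind2 F e f := ind2_of_not_mem_span he hf
  obtain ⟨f', hf'⟩ := (existsUnique_partner Λ hef he'mem he'0).exists
  have hf'0 : f' ≠ 0 := partner_ne_zero Λ hef he'0 he'mem hf'.1 hf'.2
  -- definition of g
  have hgex : ∀ v : V, ∃ w : V,
      (v = 0 → w = 0) ∧
      (v ∉ span F ({e} : Set V) →
        w ∈ Λ (span F ({v} : Set V)) ∧ e' + w ∈ Λ (span F ({e + v} : Set V))) ∧
      (v ≠ 0 → v ∈ span F ({e} : Set V) →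
        w ∈ Λ (span F ({v} : Set V)) ∧ f' + w ∈ Λ (span F ({f + v} : Set V))) := by
    intro v
    by_cases hv : v ∈ span F ({e} : Set V)
    · rcases eq_or_ne v 0 with rfl | hv0
      · exact ⟨0, fun _ => rfl, fun h => absurd hv h, fun h => absurd rfl h⟩
      · have hfv : Ind2 F f v := ind2_of_mem_span hf hv hv0
        obtain ⟨w, hw⟩ := (existsUnique_partner Λ hfv hf'.1 hf'0).exists
        exact ⟨w, fun h => absurd h hv0, fun h => absurd hv h, fun _ _ => hw⟩
    · have hev : Ind2 F e v := ind2_of_not_mem_span he hv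
      obtain ⟨w, hw⟩ := (existsUnique_partner Λ hev he'mem he'0).exists
      refine ⟨w, fun h => absurd (h ▸ zero_mem _) hv, fun _ => hw, fun _ h => absurd h hv⟩
  choose g hg0 hg1 hg2 using hgex
  have hg0' : g 0 = 0 := hg0 0 rfl
  have hgmem : ∀ v : V, v ≠ 0 → g v ∈ Λ (span F ({v} : Set V)) := by
    intro v hv
    by_cases h : v ∈ span F ({e} : Set V)
    · exact (hg2 v hv h).1
    · exact (hg1 v h).1
  have hgne : ∀ v : V, v ≠ 0 → g v ≠ 0 := by
    intro v hv
    by_cases h : v ∈ span F ({e} : Set V)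
    · have hfv : Ind2 F f v := ind2_of_mem_span hf h hv
      exact partner_ne_zero Λ hfv hf'0 hf'.1 (hg2 v hv h).1 (hg2 v hv h).2
    · have hev : Ind2 F e v := ind2_of_not_mem_span he h
      exact partner_ne_zero Λ hev he'0 he'mem (hg1 v h).1 (hg1 v h).2
  -- master transport lemma
  have hF : ∀ t v : V, Ind2 F t v → g t + g v ∈ Λ (span F ({t + v} : Set V)) := by
    intro t v htv
    have ht0 : t ≠ 0 := htv.left_ne
    have hv0 : v ≠ 0 := htv.right_ne
    obtain ⟨s, hs⟩ := exists_not_mem_span hinf {e, f, t, v} (Set.toFinite _)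
    have hse : s ∉ span F ({e} : Set V) := not_mem_span_single (by simp) hs
    have hs0 : s ≠ 0 := fun h => hse (h ▸ zero_mem _)
    have hgs := hg1 s hse
    have hgs0 : g s ≠ 0 := hgne s hs0
    have claim : ∀ x : V, x ≠ 0 → x ∈ ({e, f, t, v} : Set V) → s ∉ span F ({x} : Set V) →
        g x + g s ∈ Λ (span F ({x + s} : Set V)) := by
      intro x hx0 hxmem hsx
      have hsex : s ∉ span F ({e} : Set V) ⊔ span F ({x} : Set V) :=
        not_mem_span_pair (by simp) hxmem hs
      have hsfx : s ∉ span F ({f} : Set V) ⊔ span F ({x} : Set V) :=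
        not_mem_span_pair (by simp) hxmem hs
      have hxs : Ind2 F x s := ind2_of_not_mem_span hx0 hsx
      by_cases hxe : x ∈ span F ({e} : Set V)
      · -- x on the line of e : use the f-based branch
        have hgx := hg2 x hx0 hxe
        have hgx0 : g x ≠ 0 := hgne x hx0
        -- Step A : f' + g s ∈ L (f + s)
        have hsef : s ∉ span F ({e} : Set V) ⊔ span F ({f} : Set V) :=
          not_mem_span_pair (by simp) (by simp) hs
        have h3efs : Ind3 F e f s := ind3_of_not_mem_span hef hsef
        have hfs : Ind2 F f s := h3efs.ind2_23
        obtain ⟨w, hw⟩ := (existsUnique_partner Λ hfs hf'.1 hf'0).exists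
        have hgsw : g s = w :=
          transport Λ h3efs he'mem he'0 hf'.1 hf'.2 hgs.1 hgs.2 hw.1 hw.2
        have stepA : f' + g s ∈ Λ (span F ({f + s} : Set V)) := by
          rw [hgsw]; exact hw.2
        -- Step B : transport along (f, x, s)
        have hfx : Ind2 F f x := ind2_of_mem_span hf hxe hx0
        have h3fxs : Ind3 F f x s := ind3_of_not_mem_span hfx hsfx
        obtain ⟨w2, hw2⟩ := (existsUnique_partner Λ hxs hgx.1 hgx0).exists
        have hgsw2 : g s = w2 :=
          transport Λ h3fxs hf'.1 hf'0 hgx.1 hgx.2 hgs.1 stepA hw2.1 hw2.2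
        rw [hgsw2]; exact hw2.2
      · -- x off the line of e : use the e-based branch
        have hgx := hg1 x hxe
        have hgx0 : g x ≠ 0 := hgne x hx0
        have hex : Ind2 F e x := ind2_of_not_mem_span he hxe
        have h3exs : Ind3 F e x s := ind3_of_not_mem_span hex hsex
        obtain ⟨w, hw⟩ := (existsUnique_partner Λ hxs hgx.1 hgx0).exists
        have hgsw : g s = w :=
          transport Λ h3exs he'mem he'0 hgx.1 hgx.2 hgs.1 hgs.2 hw.1 hw.2
        rw [hgsw]; exact hw.2
    have hst : s ∉ span F ({t} : Set V) := not_mem_span_single (by simp) hs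
    have hsv : s ∉ span F ({v} : Set V) := not_mem_span_single (by simp) hs
    have h2 := claim t ht0 (by simp) hst
    have h3 := claim v hv0 (by simp) hsv
    have h2' : g s + g t ∈ Λ (span F ({s + t} : Set V)) := by
      rw [add_comm s t, add_comm (g s) (g t)]; exact h2
    have h3' : g s + g v ∈ Λ (span F ({s + v} : Set V)) := by
      rw [add_comm s v, add_comm (g s) (g v)]; exact h3
    have hstv : s ∉ span F ({t} : Set V) ⊔ span F ({v} : Set V) :=
      not_mem_span_pair (by simp) (by simp) hs
    have h3stv : Ind3 F s t v := ind3_of_not_mem_span' htv hstv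
    obtain ⟨w, hw⟩ := (existsUnique_partner Λ htv (hgmem t ht0) (hgne t ht0)).exists
    have : g v = w :=
      transport Λ h3stv hgs.1 hgs0 (hgmem t ht0) h2' (hgmem v hv0) h3' hw.1 hw.2
    rw [this]; exact hw.2
  -- additivity on independent vectors
  have haddind : ∀ u v : V, Ind2 F u v → g (u + v) = g u + g v := by
    intro u v huv
    obtain ⟨t, ht⟩ := exists_not_mem_span hinf {u, v} (Set.toFinite _)
    have htuv : t ∉ span F ({u} : Set V) ⊔ span F ({v} : Set V) :=
      not_mem_span_pair (by simp) (by simp) ht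
    have h3 : Ind3 F t u v := ind3_of_not_mem_span' huv htuv
    have htu : Ind2 F t u :=
      (ind2_of_not_mem_span huv.left_ne (not_mem_span_single (by simp) ht)).symm
    have htv : Ind2 F t v :=
      (ind2_of_not_mem_span huv.right_ne (not_mem_span_single (by simp) ht)).symm
    have ht0 : t ≠ 0 := htu.left_ne
    have htsum : Ind2 F t (u + v) :=
      (ind2_of_not_mem_span huv.add_ne (not_mem_span_add htuv)).symm
    have h1 := hF t u htu
    have h2 := hF t v htv
    have hsum := hF t (u + v) htsum
    have hx : g t + g u + g v ∈ Λ (span F ({t + u + v} : Set V)) := by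
      rw [span_sum3 h3, Λ.map_inf, Λ.map_sup, Λ.map_sup]
      constructor
      · exact add_mem (mem_sup_left h1) (mem_sup_right (hgmem v huv.right_ne))
      · have heq : g t + g u + g v = (g t + g v) + g u := by abel
        rw [heq]
        exact add_mem (mem_sup_left h2) (mem_sup_right (hgmem u huv.left_ne))
    have hguv : g u + g v ∈ Λ (span F ({u + v} : Set V)) := by
      rw [span_sum_of3 h3, Λ.map_inf, Λ.map_sup, Λ.map_sup]
      constructor
      · have heq : g u + g v = (g t + g u + g v) + (-1 : F) • g t := by module
        rw [heq]
        exact add_mem (mem_sup_left hx)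
          (mem_sup_right (Submodule.smul_mem _ _ (hgmem t ht0)))
      · exact add_mem (mem_sup_left (hgmem u huv.left_ne))
          (mem_sup_right (hgmem v huv.right_ne))
    have hxx : g t + (g u + g v) ∈ Λ (span F ({t + (u + v)} : Set V)) := by
      have e1 : t + (u + v) = t + u + v := by abel
      have e2 : g t + (g u + g v) = g t + g u + g v := by abel
      rw [e1, e2]; exact hx
    exact (existsUnique_partner Λ htsum (hgmem t ht0) (hgne t ht0)).unique
      ⟨hgmem (u + v) huv.add_ne, hsum⟩ ⟨hguv, hxx⟩
  -- full additivity
  have hadd : ∀ u v : V, g (u + v) = g u + g v := by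
    intro u v
    rcases eq_or_ne u 0 with rfl | hu0
    · rw [zero_add, hg0', zero_add]
    rcases eq_or_ne v 0 with rfl | hv0
    · rw [add_zero, hg0', add_zero]
    by_cases hind : Ind2 F u v
    · exact haddind u v hind
    obtain ⟨c, hc0, rfl⟩ : ∃ c : F, c ≠ 0 ∧ v = c • u := by
      simp only [Ind2, not_forall] at hind
      obtain ⟨a, b, hab, hnot⟩ := hind
      rcases eq_or_ne b 0 with hb | hb
      · exfalso
        subst hb
        rw [zero_smul, add_zero] at hab
        rcases smul_eq_zero.1 hab with h | h
        · exact hnot ⟨h, rfl⟩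
        · exact hu0 h
      · have hveq : v = (-(b⁻¹ * a)) • u := by
          have hbv : b • v = -(a • u) := by linear_combination (norm := module) hab
          have h2 : v = b⁻¹ • (b • v) := by rw [smul_smul, inv_mul_cancel₀ hb, one_smul]
          rw [h2, hbv, smul_neg, smul_smul, neg_smul]
        exact ⟨_, fun h => hv0 (by rw [hveq, h, zero_smul]), hveq⟩
    obtain ⟨t, ht⟩ := exists_not_mem_span hinf {u} (Set.toFinite _)
    have htu : t ∉ span F ({u} : Set V) := not_mem_span_single (by simp) ht
    have hut : Ind2 F u t := ind2_of_not_mem_span hu0 htu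
    have ht0 : t ≠ 0 := hut.right_ne
    rcases eq_or_ne (1 + c) 0 with hc1 | hc1
    · -- v = -u
      have hceq : c = -1 := by linear_combination hc1
      subst hceq
      have hveq : (-1 : F) • u = -u := by module
      rw [hveq, add_neg_cancel, hg0']
      have h1 : Ind2 F (-u) (u + t) := by
        intro a b hab
        have hkey : (b - a) • u + b • t = 0 := by linear_combination (norm := module) hab
        obtain ⟨hb1, hb2⟩ := hut _ _ hkey
        have hba : b = a := sub_eq_zero.1 hb1
        exact ⟨hba ▸ hb2, hb2⟩
      have h2 := haddind (-u) (u + t) h1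
      have e1 : -u + (u + t) = t := by abel
      rw [e1, haddind u t hut] at h2
      linear_combination (norm := module) h2
    · have hvt : Ind2 F (c • u) t := by
        intro a b hab
        have hkey : (a * c) • u + b • t = 0 := by rw [← hab]; module
        obtain ⟨hb1, hb2⟩ := hut _ _ hkey
        exact ⟨(mul_eq_zero.1 hb1).resolve_right hc0, hb2⟩
      have huvt : Ind2 F u (c • u + t) := by
        intro a b hab
        have hkey : (a + b * c) • u + b • t = 0 := by rw [← hab]; module
        obtain ⟨hb1, hb2⟩ := hut _ _ hkey
        rw [hb2, zero_mul, add_zero] at hb1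
        exact ⟨hb1, hb2⟩
      have hsumt : Ind2 F (u + c • u) t := by
        intro a b hab
        have hkey : (a * (1 + c)) • u + b • t = 0 := by rw [← hab]; module
        obtain ⟨hb1, hb2⟩ := hut _ _ hkey
        exact ⟨(mul_eq_zero.1 hb1).resolve_right hc1, hb2⟩
      have h1 := haddind u (c • u + t) huvt
      have e1 : u + (c • u + t) = (u + c • u) + t := by abel
      rw [e1, haddind (u + c • u) t hsumt, haddind (c • u) t hvt] at h1
      linear_combination (norm := module) h1
  -- injectivity
  have hneg : ∀ v : V, g (-v) = - g v := by
    intro v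
    have := hadd v (-v)
    rw [add_neg_cancel, hg0'] at this
    exact eq_neg_of_add_eq_zero_right this.symm
  have hinj : Function.Injective g := by
    intro x y hxy
    by_contra hne
    have hxy0 : x - y ≠ 0 := sub_ne_zero.2 hne
    apply hgne _ hxy0
    have : g (x - y) = g x - g y := by
      rw [sub_eq_add_neg, hadd, hneg, ← sub_eq_add_neg]
    rw [this, hxy, sub_self]
  have hgindep : ∀ u v : V, Ind2 F u v → ∀ α β : F, α • g u + β • g v = 0 → α = 0 ∧ β = 0 := by
    intro u v huv α β hαβ
    have hmem : α • g u ∈ Λ (span F ({u} : Set V)) ⊓ Λ (span F ({v} : Set V)) := by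
      constructor
      · exact Submodule.smul_mem _ _ (hgmem u huv.left_ne)
      · have : α • g u = -(β • g v) := by linear_combination (norm := module) hαβ
        rw [this]
        exact neg_mem (Submodule.smul_mem _ _ (hgmem v huv.right_ne))
    rw [map_inf_bot Λ huv] at hmem
    have hα : α = 0 := by
      rcases smul_eq_zero.1 hmem with h | h
      · exact h
      · exact absurd h (hgne u huv.left_ne)
    refine ⟨hα, ?_⟩
    rw [hα, zero_smul, zero_add] at hαβ
    rcases smul_eq_zero.1 hαβ with h | h
    · exact h
    · exact absurd h (hgne v huv.right_ne)
  -- scalar action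
  have hσex : ∀ a : F, ∃ b : F, ∀ v : V, g (a • v) = b • g v := by
    intro a
    rcases eq_or_ne a 0 with rfl | ha0
    · exact ⟨0, fun v => by rw [zero_smul, hg0', zero_smul]⟩
    have hkex : ∀ v : V, ∃ kk : F, v ≠ 0 → g (a • v) = kk • g v := by
      intro v
      rcases eq_or_ne v 0 with rfl | hv0
      · exact ⟨0, fun h => absurd rfl h⟩
      have hav : a • v ≠ 0 := smul_ne_zero ha0 hv0
      have h1 : g (a • v) ∈ Λ (span F ({v} : Set V)) := by
        have hspan : span F ({a • v} : Set V) = span F ({v} : Set V) :=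
          span_singleton_smul_eq (IsUnit.mk0 a ha0) v
        rw [← hspan]; exact hgmem _ hav
      have h2 : Λ (span F ({v} : Set V)) = span F ({g v} : Set V) :=
        atom_eq_span_of_mem (map_span_isAtom Λ hv0) (hgmem v hv0) (hgne v hv0)
      rw [h2, mem_span_singleton] at h1
      obtain ⟨kk, hkk⟩ := h1
      exact ⟨kk, fun _ => hkk.symm⟩
    choose k hk using hkex
    have hsame : ∀ u v : V, Ind2 F u v → k u = k v := by
      intro u v huv
      have h1 : g (a • (u + v)) = k (u + v) • (g u + g v) := by
        rw [hk (u + v) huv.add_ne, hadd]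
      have h2 : g (a • (u + v)) = k u • g u + k v • g v := by
        rw [smul_add, hadd, hk u huv.left_ne, hk v huv.right_ne]
      have hkey : (k (u + v) - k u) • g u + (k (u + v) - k v) • g v = 0 := by
        rw [h2] at h1
        linear_combination (norm := module) (-1 : ℤ) • h1
      obtain ⟨hd1, hd2⟩ := hgindep u v huv _ _ hkey
      rw [← sub_eq_zero]
      linear_combination hd2 - hd1
    have hconst : ∀ v : V, v ≠ 0 → k v = k e := by
      intro v hv0
      by_cases hind : Ind2 F e v
      · exact (hsame e v hind).symm
      · obtain ⟨t, ht⟩ := exists_not_mem_span hinf {e, v} (Set.toFinite _)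
        have h1 : Ind2 F e t := ind2_of_not_mem_span he (not_mem_span_single (by simp) ht)
        have h2 : Ind2 F v t := ind2_of_not_mem_span hv0 (not_mem_span_single (by simp) ht)
        rw [hsame v t h2, hsame e t h1]
    refine ⟨k e, fun v => ?_⟩
    rcases eq_or_ne v 0 with rfl | hv0
    · rw [smul_zero, hg0', smul_zero]
    · rw [hk v hv0, hconst v hv0]
  choose σf hσf using hσex
  have ge0 : g e ≠ 0 := hgne e he
  have hσ0 : σf 0 = 0 := by
    have := hσf 0 e
    rw [zero_smul, hg0'] at this
    rcases smul_eq_zero.1 this.symm with h | h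
    · exact h
    · exact absurd h ge0
  have hσ1 : σf 1 = 1 := by
    have := hσf 1 e
    rw [one_smul] at this
    have h2 : (σf 1 - 1) • g e = 0 := by
      rw [sub_smul, one_smul, ← this, sub_self]
    rcases smul_eq_zero.1 h2 with h | h
    · exact sub_eq_zero.1 h
    · exact absurd h ge0
  have hσadd : ∀ a b : F, σf (a + b) = σf a + σf b := by
    intro a b
    have h1 := hσf (a + b) e
    rw [add_smul, hadd, hσf a e, hσf b e] at h1
    have h2 : (σf (a + b) - σf a - σf b) • g e = 0 := by
      rw [sub_smul, sub_smul, ← h1]; module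
    rcases smul_eq_zero.1 h2 with h | h
    · linear_combination h
    · exact absurd h ge0
  have hσmul : ∀ a b : F, σf (a * b) = σf a * σf b := by
    intro a b
    have h1 := hσf (a * b) e
    rw [mul_smul, hσf a (b • e), hσf b e, smul_smul] at h1
    have h2 : (σf (a * b) - σf a * σf b) • g e = 0 := by
      rw [sub_smul, ← h1]; module
    rcases smul_eq_zero.1 h2 with h | h
    · linear_combination h
    · exact absurd h ge0
  have hσinj : Function.Injective σf := by
    intro a b hab
    have h1 : g (a • e) = g (b • e) := by rw [hσf a e, hσf b e, hab]
    have h2 := hinj h1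
    have h3 : (a - b) • e = 0 := by rw [sub_smul, h2, sub_self]
    rcases smul_eq_zero.1 h3 with h | h
    · linear_combination h
    · exact absurd h he
  have hff0 : f ≠ 0 := hef.right_ne
  have gf0 : g f ≠ 0 := hgne f hff0
  have hσsurj : Function.Surjective σf := by
    intro d
    rcases eq_or_ne d 0 with rfl | hd0
    · exact ⟨0, hσ0⟩
    have hy0 : g e + d • g f ≠ 0 := by
      intro h
      have h1 : (1 : F) • g e + d • g f = 0 := by rw [one_smul]; exact h
      exact one_ne_zero (hgindep e f hef _ _ h1).1
    have hAatom : IsAtom (Λ.symm (span F ({g e + d • g f} : Set V))) := by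
      rw [← Λ.isAtom_iff, Λ.apply_symm_apply]
      exact isAtom_span_singleton hy0
    obtain ⟨z, hz, hz0⟩ := exists_mem_ne_zero_of_ne_bot hAatom.1
    have hAz : Λ.symm (span F ({g e + d • g f} : Set V)) = span F ({z} : Set V) :=
      atom_eq_span_of_mem hAatom hz hz0
    have hAle : Λ.symm (span F ({g e + d • g f} : Set V)) ≤
        span F ({e} : Set V) ⊔ span F ({f} : Set V) := by
      rw [← Λ.le_iff_le, Λ.map_sup, Λ.apply_symm_apply]
      refine span_le.2 (Set.singleton_subset_iff.2 ?_)
      exact add_mem (mem_sup_left (hgmem e he))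
        (mem_sup_right (Submodule.smul_mem _ _ (hgmem f hff0)))
    have hzef : z ∈ span F ({e} : Set V) ⊔ span F ({f} : Set V) := hAle hz
    rw [mem_sup] at hzef
    obtain ⟨p, hp, q, hq, hpq⟩ := hzef
    rw [mem_span_singleton] at hp hq
    obtain ⟨α, rfl⟩ := hp
    obtain ⟨β, rfl⟩ := hq
    have hgz : g z = σf α • g e + σf β • g f := by
      rw [← hpq, hadd, hσf, hσf]
    have hgzmem : g z ∈ span F ({g e + d • g f} : Set V) := by
      have hLz : Λ (span F ({z} : Set V)) = span F ({g e + d • g f} : Set V) := by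
        rw [← hAz, Λ.apply_symm_apply]
      rw [← hLz]
      exact hgmem z hz0
    rw [mem_span_singleton] at hgzmem
    obtain ⟨cc, hcc⟩ := hgzmem
    have hkey : (σf α - cc) • g e + (σf β - cc * d) • g f = 0 := by
      rw [hgz] at hcc
      linear_combination (norm := module) (-1 : ℤ) • hcc
    obtain ⟨hd1, hd2⟩ := hgindep e f hef _ _ hkey
    have hα : σf α = cc := sub_eq_zero.1 hd1
    have hβ : σf β = cc * d := sub_eq_zero.1 hd2
    have hcc0 : cc ≠ 0 := by
      rintro rfl
      apply hgne z hz0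
      rw [← hcc, zero_smul]
    have hα0 : α ≠ 0 := by
      rintro rfl
      rw [hσ0] at hα
      exact hcc0 hα.symm
    refine ⟨β * α⁻¹, ?_⟩
    have hinv : σf α⁻¹ = cc⁻¹ := by
      have h1 : σf (α⁻¹ * α) = σf α⁻¹ * σf α := hσmul _ _
      rw [inv_mul_cancel₀ hα0, hσ1, hα] at h1
      exact eq_inv_of_mul_eq_one_left h1.symm
    rw [hσmul, hinv, hβ]
    field_simp
  have hgsurj : Function.Surjective g := by
    intro w
    rcases eq_or_ne w 0 with rfl | hw0
    · exact ⟨0, hg0'⟩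
    have hAatom : IsAtom (Λ.symm (span F ({w} : Set V))) := by
      rw [← Λ.isAtom_iff, Λ.apply_symm_apply]
      exact isAtom_span_singleton hw0
    obtain ⟨v, hv, hv0⟩ := exists_mem_ne_zero_of_ne_bot hAatom.1
    have hAv : Λ.symm (span F ({w} : Set V)) = span F ({v} : Set V) :=
      atom_eq_span_of_mem hAatom hv hv0
    have hΛv : Λ (span F ({v} : Set V)) = span F ({w} : Set V) := by
      rw [← hAv, Λ.apply_symm_apply]
    have hgvw : g v ∈ span F ({w} : Set V) := hΛv ▸ hgmem v hv0
    have hspan : span F ({w} : Set V) = span F ({g v} : Set V) :=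
      atom_eq_span_of_mem (isAtom_span_singleton hw0) hgvw (hgne v hv0)
    have hwmem : w ∈ span F ({g v} : Set V) := hspan ▸ mem_span_singleton_self w
    rw [mem_span_singleton] at hwmem
    obtain ⟨d, hd⟩ := hwmem
    obtain ⟨da, hda⟩ := hσsurj d
    exact ⟨da • v, by rw [hσf, hda, hd]⟩
  -- assemble
  let σR : F →+* F :=
    { toFun := σf, map_one' := hσ1, map_mul' := fun a b => hσmul a b,
      map_zero' := hσ0, map_add' := hσadd }
  have himg : ∀ W : Submodule F V, (Λ W : Set V) = g '' (W : Set V) := ?_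
  · exact ⟨RingEquiv.ofBijective σR ⟨hσinj, hσsurj⟩,
      AddEquiv.ofBijective (AddMonoidHom.mk' g hadd) ⟨hinj, hgsurj⟩, fun a v => hσf a v,
      fun W => himg W⟩
  intro W
  ext y
  simp only [Set.mem_image, SetLike.mem_coe]
  constructor
  · intro hy
    rcases eq_or_ne y 0 with rfl | hy0
    · exact ⟨0, W.zero_mem, hg0'⟩
    · obtain ⟨x, rfl⟩ := hgsurj y
      have hx0 : x ≠ 0 := by rintro rfl; rw [hg0'] at hy0; exact hy0 rfl
      refine ⟨x, ?_, rfl⟩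
      have h1 : Λ (span F ({x} : Set V)) = span F ({g x} : Set V) :=
        atom_eq_span_of_mem (map_span_isAtom Λ hx0) (hgmem x hx0) (hgne x hx0)
      have h2 : span F ({g x} : Set V) ≤ Λ W :=
        span_le.2 (Set.singleton_subset_iff.2 hy)
      have h3 : span F ({x} : Set V) ≤ W := Λ.le_iff_le.1 (h1 ▸ h2)
      exact h3 (mem_span_singleton_self x)
  · rintro ⟨x, hx, rfl⟩
    rcases eq_or_ne x 0 with rfl | hx0
    · rw [hg0']; exact (Λ W).zero_mem
    · exact Λ.monotone (span_le.2 (Set.singleton_subset_iff.2 hx)) (hgmem x hx0)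

lemma scalar_iff (hinf : ¬ FiniteDimensional F V) (σ σ₁ : F ≃+* F) (μ μ₁ : V ≃+ V)
    (hμ : ∀ (a : F) (v : V), μ (a • v) = σ a • μ v)
    (hμ₁ : ∀ (a : F) (v : V), μ₁ (a • v) = σ₁ a • μ₁ v) :
    (∀ W : Submodule F V, μ '' (W : Set V) = μ₁ '' (W : Set V)) ↔
      ∃ γ : F, γ ≠ 0 ∧ ∀ v : V, μ v = γ • μ₁ v := by
  constructor
  · intro h
    have hμ0 : ∀ v : V, μ v = 0 → v = 0 := by
      intro v hv
      have : μ v = μ 0 := by rw [hv, map_zero]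
      exact μ.injective this
    have hμ₁0 : ∀ v : V, v ≠ 0 → μ₁ v ≠ 0 := by
      intro v hv h0
      exact hv (μ₁.injective (by rw [h0, map_zero]))
    have hdd : ∀ v : V, ∃ d : F, v ≠ 0 → (d ≠ 0 ∧ μ v = d • μ₁ v) := by
      intro v
      rcases eq_or_ne v 0 with rfl | hv0
      · exact ⟨0, fun h' => absurd rfl h'⟩
      have h1 : μ v ∈ μ₁ '' (span F ({v} : Set V) : Set V) := by
        rw [← h]
        exact ⟨v, mem_span_singleton_self v, rfl⟩
      obtain ⟨x, hx, hxv⟩ := h1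
      rw [SetLike.mem_coe, mem_span_singleton] at hx
      obtain ⟨c, rfl⟩ := hx
      refine ⟨σ₁ c, fun _ => ⟨?_, by rw [← hxv, hμ₁]⟩⟩
      intro hc
      apply hv0
      apply hμ0
      rw [← hxv, hμ₁, hc, zero_smul]
    choose dd hdd using hdd
    have hind : ∀ u v : V, Ind2 F u v → ∀ a b : F, a • μ₁ u + b • μ₁ v = 0 →
        a = 0 ∧ b = 0 := by
      intro u v huv a b hab
      have h1 : μ₁ (σ₁.symm a • u + σ₁.symm b • v) = 0 := by
        rw [map_add, hμ₁, hμ₁, σ₁.apply_symm_apply, σ₁.apply_symm_apply, hab]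
      have h2 : σ₁.symm a • u + σ₁.symm b • v = 0 :=
        μ₁.injective (by rw [h1, map_zero])
      obtain ⟨ha, hb⟩ := huv _ _ h2
      constructor
      · have := congrArg σ₁ ha
        rwa [σ₁.apply_symm_apply, map_zero] at this
      · have := congrArg σ₁ hb
        rwa [σ₁.apply_symm_apply, map_zero] at this
    have hsame : ∀ u v : V, Ind2 F u v → dd u = dd v := by
      intro u v huv
      obtain ⟨hdu0, hdu⟩ := hdd u huv.left_ne
      obtain ⟨hdv0, hdv⟩ := hdd v huv.right_ne
      obtain ⟨hds0, hds⟩ := hdd (u + v) huv.add_ne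
      have h1 : dd (u + v) • (μ₁ u + μ₁ v) = dd u • μ₁ u + dd v • μ₁ v := by
        rw [← hdu, ← hdv, ← map_add, ← map_add, hds, map_add]
      have hkey : (dd (u + v) - dd u) • μ₁ u + (dd (u + v) - dd v) • μ₁ v = 0 := by
        linear_combination (norm := module) h1
      obtain ⟨h2, h3⟩ := hind u v huv _ _ hkey
      rw [← sub_eq_zero]
      linear_combination h3 - h2
    obtain ⟨e, he⟩ : ∃ e : V, e ≠ 0 := by
      obtain ⟨x, hx⟩ := exists_not_mem_span hinf ∅ Set.finite_empty
      exact ⟨x, fun h' => hx (h' ▸ zero_mem _)⟩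
    have hconst : ∀ v : V, v ≠ 0 → dd v = dd e := by
      intro v hv0
      by_cases hind2 : Ind2 F e v
      · exact (hsame e v hind2).symm
      · obtain ⟨t, ht⟩ := exists_not_mem_span hinf {e, v} (Set.toFinite _)
        have h1 : Ind2 F e t := ind2_of_not_mem_span he (not_mem_span_single (by simp) ht)
        have h2 : Ind2 F v t := ind2_of_not_mem_span hv0 (not_mem_span_single (by simp) ht)
        rw [hsame v t h2, hsame e t h1]
    refine ⟨dd e, (hdd e he).1, fun v => ?_⟩
    rcases eq_or_ne v 0 with rfl | hv0
    · rw [map_zero, map_zero, smul_zero]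
    · rw [(hdd v hv0).2, hconst v hv0]
  · rintro ⟨γ, hγ0, hγ⟩ W
    ext y
    simp only [Set.mem_image, SetLike.mem_coe]
    constructor
    · rintro ⟨x, hx, rfl⟩
      refine ⟨σ₁.symm γ • x, W.smul_mem _ hx, ?_⟩
      rw [hμ₁, σ₁.apply_symm_apply, ← hγ]
    · rintro ⟨x, hx, rfl⟩
      refine ⟨σ.symm γ⁻¹ • x, W.smul_mem _ hx, ?_⟩
      rw [hμ, σ.apply_symm_apply, hγ, smul_smul, inv_mul_cancel₀ hγ0, one_smul]

end FTPG

/-- Fundamental theorem of projective geometry for an infinite-dimensional vector space: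
every automorphism of the lattice of subspaces is induced by a bijective semilinear
transformation, and two bijective semilinear transformations induce the same map on
subspaces iff they differ by a nonzero scalar. -/
theorem subspace_lattice_automorphism
    (F V : Type*) [Field F] [AddCommGroup V] [Module F V]
    (hinf : ¬ FiniteDimensional F V) :
    (∀ Λ : Submodule F V ≃o Submodule F V,
      ∃ (σ : F ≃+* F) (μ : V ≃+ V),
        (∀ (a : F) (v : V), μ (a • v) = σ a • μ v) ∧
        ∀ W : Submodule F V, (Λ W : Set V) = μ '' (W : Set V)) ∧
    (∀ (σ σ₁ : F ≃+* F) (μ μ₁ : V ≃+ V),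
      (∀ (a : F) (v : V), μ (a • v) = σ a • μ v) →
      (∀ (a : F) (v : V), μ₁ (a • v) = σ₁ a • μ₁ v) →
      ((∀ W : Submodule F V, μ '' (W : Set V) = μ₁ '' (W : Set V)) ↔
        ∃ γ : F, γ ≠ 0 ∧ ∀ v : V, μ v = γ • μ₁ v)) := by
  exact ⟨fun Λ => FTPG.exists_semilinear hinf Λ,
    fun σ σ₁ μ μ₁ hμ hμ₁ => FTPG.scalar_iff hinf σ σ₁ μ μ₁ hμ hμ₁⟩
end
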